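/- arXiv:math/0606227 — 5 statements merged into one kernel-verified Lean document; each statement's English description precedes it below -/
import Mathlib

section
/- A lattice tetrahedron T is clean if and only if either T ≈ T_{0,0,1} or T ≈ T_{a,b,n} for some integers a, b, n with n ≥ 2, 0 ≤ a, b ≤ n − 1 and gcd(a, n) = gcd(b, n) = gcd(1 − a − b, n) = 1. -/
open scoped BigOperators

/-- A point of `ℝ³` is a lattice point if every coordinate is an integer. -/
def IsLatticePoint (x : Fin 3 → ℝ) : Prop := ∀ i, ∃ z : ℤ, x i = (z : ℝ)

/-- Four lattice points of `ℝ³` that are not coplanar: the vertex map of a lattice tetrahedron. -/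
def IsLatticeTet (v : Fin 4 → Fin 3 → ℝ) : Prop :=
  (∀ j, IsLatticePoint (v j)) ∧ AffineIndependent ℝ v

/-- The solid tetrahedron spanned by the four vertices. -/
def tetSet (v : Fin 4 → Fin 3 → ℝ) : Set (Fin 3 → ℝ) := convexHull ℝ (Set.range v)

/-- A lattice tetrahedron is clean if the only lattice points on its boundary are its vertices. -/
def CleanTet (v : Fin 4 → Fin 3 → ℝ) : Prop :=
  ∀ x ∈ frontier (tetSet v), IsLatticePoint x → x ∈ Set.range v

/-- The affine map `x ↦ M x + u` determined by an integer matrix `M` and integer vector `u`. -/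
noncomputable def affMap (M : Matrix (Fin 3) (Fin 3) ℤ) (u : Fin 3 → ℤ) (x : Fin 3 → ℝ) :
    Fin 3 → ℝ :=
  fun i => (∑ j, (M i j : ℝ) * x j) + (u i : ℝ)

/-- Two lattice tetrahedra are equivalent if an affine unimodular map carries the vertex set of
one onto the vertex set of the other. -/
def TetEquiv (v v' : Fin 4 → Fin 3 → ℝ) : Prop :=
  ∃ M : Matrix (Fin 3) (Fin 3) ℤ, (M.det = 1 ∨ M.det = -1) ∧
    ∃ u : Fin 3 → ℤ, affMap M u '' Set.range v = Set.range v'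

/-- The tetrahedron `T_{a,b,n}` with vertices `(0,0,0)`, `(1,0,0)`, `(0,1,0)`, `(a,b,n)`. -/
noncomputable def stdTet (a b n : ℤ) : Fin 4 → Fin 3 → ℝ :=
  ![![0, 0, 0], ![1, 0, 0], ![0, 1, 0], ![(a : ℝ), (b : ℝ), (n : ℝ)]]

/-- The number `i(T)` of lattice points interior to the tetrahedron. -/
noncomputable def interiorLatticeCount (v : Fin 4 → Fin 3 → ℝ) : ℕ :=
  Set.ncard {x : Fin 3 → ℝ | x ∈ interior (tetSet v) ∧ IsLatticePoint x}

/-- A 1-point lattice tetrahedron: clean, with exactly one interior lattice point. -/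
def OnePointTet (v : Fin 4 → Fin 3 → ℝ) : Prop :=
  IsLatticeTet v ∧ CleanTet v ∧
    ∃! w : Fin 3 → ℝ, w ∈ interior (tetSet v) ∧ IsLatticePoint w

/-- An empty tetrahedron: no lattice points in the interior. -/
def IsEmptyTet (v : Fin 4 → Fin 3 → ℝ) : Prop :=
  ∀ x ∈ interior (tetSet v), ¬ IsLatticePoint x

/-- A quadruple `(d₁,d₂,d₃,d₄)` of positive integers is ripe if, with `N = ∑ dⱼ`:
(i) each `gcd(dⱼ, N) = 1`; (ii) each `dᵢ` divides the sum of two of the other three;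
(iii) `dⱼ = dᵢ` (for `j ≠ i`) or `dⱼ = 2 dᵢ` forces `dᵢ = 1`. -/
def Ripe (d : Fin 4 → ℤ) : Prop :=
  (∀ j, 0 < d j) ∧
  (∀ j, Int.gcd (d j) (∑ i, d i) = 1) ∧
  (∀ i, ∃ j k, j ≠ i ∧ k ≠ i ∧ j ≠ k ∧ d i ∣ (d j + d k)) ∧
  (∀ i j, ((j ≠ i ∧ d j = d i) ∨ d j = 2 * d i) → d i = 1)

/-- The `u`-width of a set `S ⊆ ℝ³`: `max {u·x : x ∈ S} - min {u·x : x ∈ S}`. -/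
noncomputable def uWidth (S : Set (Fin 3 → ℝ)) (u : Fin 3 → ℤ) : ℝ :=
  sSup ((fun x => ∑ i, (u i : ℝ) * x i) '' S) - sInf ((fun x => ∑ i, (u i : ℝ) * x i) '' S)

/-- The lattice width of a set: the minimum of its `u`-widths over nonzero integer `u`. -/
noncomputable def latticeWidth (S : Set (Fin 3 → ℝ)) : ℝ :=
  sInf {w : ℝ | ∃ u : Fin 3 → ℤ, u ≠ 0 ∧ uWidth S u = w}

namespace Stmt2Aux

noncomputable def icast (z : Fin 3 → ℤ) : Fin 3 → ℝ := fun i => (z i : ℝ)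

lemma isLatticePoint_icast (z : Fin 3 → ℤ) : IsLatticePoint (icast z) := fun i => ⟨z i, rfl⟩

lemma exists_icast {x : Fin 3 → ℝ} (hx : IsLatticePoint x) : ∃ z, x = icast z := by
  choose z hz using hx; exact ⟨z, funext hz⟩

lemma affMap_icast (M : Matrix (Fin 3) (Fin 3) ℤ) (u z : Fin 3 → ℤ) :
    affMap M u (icast z) = icast (M.mulVec z + u) := by
  funext i
  simp only [affMap, icast, Matrix.mulVec, dotProduct, Pi.add_apply]
  push_cast
  ring

lemma affMap_comp (M M' : Matrix (Fin 3) (Fin 3) ℤ) (u u' : Fin 3 → ℤ) (x : Fin 3 → ℝ) :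
    affMap M u (affMap M' u' x) = affMap (M * M') (M.mulVec u' + u) x := by
  funext i
  simp only [affMap, Pi.add_apply, Matrix.mulVec, dotProduct, Matrix.mul_apply]
  push_cast
  simp only [Fin.sum_univ_three]
  ring

/-- the affine map version -/
noncomputable def affA (M : Matrix (Fin 3) (Fin 3) ℤ) (u : Fin 3 → ℤ) :
    (Fin 3 → ℝ) →ᵃ[ℝ] (Fin 3 → ℝ) where
  toFun := affMap M u
  linear := (M.map (Int.cast : ℤ → ℝ)).mulVecLin
  map_vadd' p v := by
    funext i
    simp only [affMap, Matrix.mulVecLin_apply, Matrix.mulVec, dotProduct,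
      Matrix.map_apply, vadd_eq_add, Pi.add_apply]
    simp only [Fin.sum_univ_three]
    ring

lemma affA_apply (M : Matrix (Fin 3) (Fin 3) ℤ) (u : Fin 3 → ℤ) (x : Fin 3 → ℝ) :
    affA M u x = affMap M u x := rfl

lemma continuous_affMap (M : Matrix (Fin 3) (Fin 3) ℤ) (u : Fin 3 → ℤ) :
    Continuous (affMap M u) := (affA M u).continuous_of_finiteDimensional

def IsUni (M : Matrix (Fin 3) (Fin 3) ℤ) : Prop := M.det = 1 ∨ M.det = -1

lemma exists_inv {M : Matrix (Fin 3) (Fin 3) ℤ} (hM : IsUni M) :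
    ∃ M', IsUni M' ∧ M * M' = 1 ∧ M' * M = 1 := by
  rcases hM with hM | hM
  · refine ⟨M.adjugate, ?_, ?_, ?_⟩
    · left; rw [Matrix.det_adjugate, hM]; norm_num
    · rw [Matrix.mul_adjugate, hM]; simp
    · rw [Matrix.adjugate_mul, hM]; simp
  · refine ⟨-M.adjugate, ?_, ?_, ?_⟩
    · right; rw [Matrix.det_neg, Matrix.det_adjugate, hM]; norm_num
    · rw [Matrix.mul_neg, Matrix.mul_adjugate, hM]; norm_num
    · rw [Matrix.neg_mul, Matrix.adjugate_mul, hM]; norm_num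

lemma affMap_one_zero (x : Fin 3 → ℝ) : affMap 1 0 x = x := by
  funext i
  simp [affMap, Matrix.one_apply]

/-- homeomorphism from a unimodular affine map -/
noncomputable def affHomeo (M M' : Matrix (Fin 3) (Fin 3) ℤ) (u : Fin 3 → ℤ)
    (h1 : M * M' = 1) (h2 : M' * M = 1) : Homeomorph (Fin 3 → ℝ) (Fin 3 → ℝ) where
  toFun := affMap M u
  invFun := affMap M' (-(M'.mulVec u))
  left_inv x := by
    rw [affMap_comp, h2]
    rw [show M'.mulVec u + -(M'.mulVec u) = 0 by ring]
    exact affMap_one_zero x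
  right_inv x := by
    rw [affMap_comp, h1]
    rw [show M.mulVec (-(M'.mulVec u)) + u = 0 by
      rw [Matrix.mulVec_neg, Matrix.mulVec_mulVec, h1, Matrix.one_mulVec]; ring]
    exact affMap_one_zero x
  continuous_toFun := continuous_affMap M u
  continuous_invFun := continuous_affMap M' _

lemma tetEquiv_refl (v : Fin 4 → Fin 3 → ℝ) : TetEquiv v v :=
  ⟨1, Or.inl (Matrix.det_one), 0, by
    rw [show affMap 1 0 = id from funext affMap_one_zero]; simp⟩

lemma tetEquiv_symm {v v' : Fin 4 → Fin 3 → ℝ} (h : TetEquiv v v') : TetEquiv v' v := by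
  obtain ⟨M, hM, u, himg⟩ := h
  obtain ⟨M', hM', h1, h2⟩ := exists_inv hM
  refine ⟨M', hM', -(M'.mulVec u), ?_⟩
  rw [← himg, ← Set.image_comp]
  have : (affMap M' (-(M'.mulVec u)) ∘ affMap M u) = id := by
    funext x
    exact (affHomeo M M' u h1 h2).left_inv x
  rw [this, Set.image_id]

lemma tetEquiv_trans {v v' v'' : Fin 4 → Fin 3 → ℝ} (h : TetEquiv v v') (h' : TetEquiv v' v'') :
    TetEquiv v v'' := by
  obtain ⟨M, hM, u, himg⟩ := h
  obtain ⟨M', hM', u', himg'⟩ := h'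
  refine ⟨M' * M, ?_, M'.mulVec u + u', ?_⟩
  · rw [Matrix.det_mul]
    rcases hM with h | h <;> rcases hM' with h' | h' <;> simp [h, h']
  · rw [← himg', ← himg, ← Set.image_comp]
    have : affMap M' u' ∘ affMap M u = affMap (M' * M) (M'.mulVec u + u') :=
      funext fun x => affMap_comp M' M u' u x
    rw [this]

lemma tetEquiv_of_forall {v v' : Fin 4 → Fin 3 → ℝ} (M : Matrix (Fin 3) (Fin 3) ℤ)
    (u : Fin 3 → ℤ) (hM : IsUni M) (hv : ∀ j, affMap M u (v j) = v' j) : TetEquiv v v' := by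
  refine ⟨M, hM, u, ?_⟩
  rw [← Set.range_comp]
  exact congrArg Set.range (funext hv)

lemma isLatticePoint_affMap {M : Matrix (Fin 3) (Fin 3) ℤ} {u : Fin 3 → ℤ} {x : Fin 3 → ℝ}
    (hx : IsLatticePoint x) : IsLatticePoint (affMap M u x) := by
  obtain ⟨z, rfl⟩ := exists_icast hx
  rw [affMap_icast]
  exact isLatticePoint_icast _

lemma cleanTet_of_tetEquiv {v v' : Fin 4 → Fin 3 → ℝ} (h : TetEquiv v v') (hc : CleanTet v) :
    CleanTet v' := by
  obtain ⟨M, hM, u, himg⟩ := h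
  obtain ⟨M', hM', h1, h2⟩ := exists_inv hM
  set e := affHomeo M M' u h1 h2 with he
  have htet : tetSet v' = e '' tetSet v := by
    show tetSet v' = affMap M u '' tetSet v
    rw [tetSet, tetSet, ← himg]
    rw [show affMap M u '' Set.range v = affA M u '' Set.range v from rfl,
      show affMap M u '' (convexHull ℝ (Set.range v)) = affA M u '' (convexHull ℝ (Set.range v)) from rfl]
    exact ((affA M u).image_convexHull (Set.range v)).symm
  intro x hx hlat
  rw [htet, ← Homeomorph.image_frontier] at hx
  obtain ⟨y, hy, rfl⟩ := hx
  have hylat : IsLatticePoint y := by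
    have : y = affMap M' (-(M'.mulVec u)) (affMap M u y) := (e.left_inv y).symm
    rw [this]
    exact isLatticePoint_affMap hlat
  have := hc y hy hylat
  rw [← himg]
  exact ⟨y, this, rfl⟩

end Stmt2Aux

section Bary
open Stmt2Aux
variable {v : Fin 4 → Fin 3 → ℝ}

lemma span_top (h : IsLatticeTet v) : affineSpan ℝ (Set.range v) = ⊤ := by
  rw [h.2.affineSpan_eq_top_iff_card_eq_finrank_add_one]
  simp

noncomputable def tetBasis (h : IsLatticeTet v) : AffineBasis (Fin 4) ℝ (Fin 3 → ℝ) :=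
  ⟨v, h.2, span_top h⟩

lemma tetBasis_apply (h : IsLatticeTet v) (j : Fin 4) : tetBasis h j = v j := rfl

lemma coord_eq (h : IsLatticeTet v) (w : Fin 4 → ℝ) (x : Fin 3 → ℝ) (hw : ∑ i, w i = 1)
    (hx : x = ∑ i, w i • v i) (j : Fin 4) : (tetBasis h).coord j x = w j := by
  have hx' : x = Finset.univ.affineCombination ℝ v w := by
    rw [Finset.univ.affineCombination_eq_linear_combination v w hw]; exact hx
  rw [hx']
  exact (tetBasis h).coord_apply_combination_of_mem (Finset.mem_univ j) hw

lemma tetSet_eq_coord (h : IsLatticeTet v) :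
    tetSet v = {x | ∀ i, 0 ≤ (tetBasis h).coord i x} := by
  have := (tetBasis h).convexHull_eq_nonneg_coord
  rw [tetSet, show Set.range v = Set.range (tetBasis h) from rfl, this]

lemma interior_tetSet (h : IsLatticeTet v) :
    interior (tetSet v) = {x | ∀ i, 0 < (tetBasis h).coord i x} := by
  have := (tetBasis h).interior_convexHull
  rw [tetSet, show Set.range v = Set.range (tetBasis h) from rfl, this]

lemma closed_tetSet : IsClosed (tetSet v) :=
  (Set.Finite.isCompact_convexHull ℝ (Set.finite_range v)).isClosed

lemma frontier_tetSet (h : IsLatticeTet v) :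
    frontier (tetSet v)
      = {x | (∀ i, 0 ≤ (tetBasis h).coord i x) ∧ ∃ i, (tetBasis h).coord i x = 0} := by
  rw [frontier, closed_tetSet.closure_eq, interior_tetSet h]
  nth_rewrite 1 [tetSet_eq_coord h]
  ext x
  simp only [Set.mem_diff, Set.mem_setOf_eq, not_forall]
  constructor
  · rintro ⟨h0, i, hi⟩
    exact ⟨h0, i, le_antisymm (not_lt.1 hi) (h0 i)⟩
  · rintro ⟨h0, i, hi⟩
    exact ⟨h0, i, by rw [hi]; exact lt_irrefl 0⟩

lemma mem_frontier_of (h : IsLatticeTet v) (w : Fin 4 → ℝ) (x : Fin 3 → ℝ)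
    (hw : ∑ i, w i = 1) (h0 : ∀ i, 0 ≤ w i) (hx : x = ∑ i, w i • v i) (j : Fin 4)
    (hj : w j = 0) : x ∈ frontier (tetSet v) := by
  rw [frontier_tetSet h]
  refine ⟨fun i => ?_, j, ?_⟩
  · rw [coord_eq h w x hw hx]; exact h0 i
  · rw [coord_eq h w x hw hx]; exact hj

lemma coord_vertex (h : IsLatticeTet v) (i j : Fin 4) :
    (tetBasis h).coord i (v j) = if i = j then 1 else 0 := by
  classical
  exact (tetBasis h).coord_apply i j

end Bary

section Std
open Stmt2Aux

/-- barycentric weights for `stdTet a b n` -/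
noncomputable def stdW (a b n : ℤ) (x : Fin 3 → ℝ) : Fin 4 → ℝ :=
  ![1 - x 0 - x 1 + x 2 * ((a : ℝ) + b - 1) / n,
    x 0 - x 2 * a / n, x 1 - x 2 * b / n, x 2 / n]

lemma sum_stdW (a b n : ℤ) (hn : n ≠ 0) (x : Fin 3 → ℝ) : ∑ i, stdW a b n x i = 1 := by
  have hn' : (n : ℝ) ≠ 0 := Int.cast_ne_zero.2 hn
  simp only [stdW, Fin.sum_univ_four, Matrix.cons_val_zero, Matrix.cons_val_one, Matrix.head_cons,
    Matrix.cons_val_two, Matrix.tail_cons, Matrix.cons_val_three]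
  field_simp
  ring

lemma comb_stdW (a b n : ℤ) (hn : n ≠ 0) (x : Fin 3 → ℝ) :
    x = ∑ i, stdW a b n x i • stdTet a b n i := by
  have hn' : (n : ℝ) ≠ 0 := Int.cast_ne_zero.2 hn
  funext j
  simp only [Fin.sum_univ_four, Pi.add_apply, Pi.smul_apply, smul_eq_mul, stdW, stdTet]
  fin_cases j <;>
    simp only [Fin.zero_eta, Fin.mk_one, Fin.reduceFinMk, Matrix.cons_val_zero, Matrix.cons_val_one, Matrix.head_cons, Matrix.cons_val_two,
      Matrix.tail_cons, Matrix.cons_val_three] <;>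
    (field_simp; try ring)

lemma stdTet_latticeTet (a b : ℤ) {n : ℤ} (hn : n ≠ 0) : IsLatticeTet (stdTet a b n) := by
  constructor
  · intro j i
    fin_cases j <;> fin_cases i
    · exact ⟨0, by norm_num [stdTet]⟩
    · exact ⟨0, by norm_num [stdTet]⟩
    · exact ⟨0, by norm_num [stdTet]⟩
    · exact ⟨1, by norm_num [stdTet]⟩
    · exact ⟨0, by norm_num [stdTet]⟩
    · exact ⟨0, by norm_num [stdTet]⟩
    · exact ⟨0, by norm_num [stdTet]⟩
    · exact ⟨1, by norm_num [stdTet]⟩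
    · exact ⟨0, by norm_num [stdTet]⟩
    · exact ⟨a, by norm_num [stdTet]⟩
    · exact ⟨b, by norm_num [stdTet]⟩
    · exact ⟨n, by norm_num [stdTet]⟩
  · rw [affineIndependent_iff_of_fintype]
    intro w hw hs
    have hs' : ∑ i, w i • stdTet a b n i = 0 := by
      rw [Finset.weightedVSub_eq_linear_combination _ hw] at hs
      exact hs
    have hn' : (n : ℝ) ≠ 0 := Int.cast_ne_zero.2 hn
    have h0 := congrFun hs' 0
    have h1 := congrFun hs' 1
    have h2 := congrFun hs' 2
    simp only [Fin.sum_univ_four, Pi.add_apply, Pi.smul_apply, smul_eq_mul, stdTet,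
      Matrix.cons_val_zero, Matrix.cons_val_one, Matrix.head_cons, Matrix.cons_val_two,
      Matrix.tail_cons, Matrix.cons_val_three, Pi.zero_apply, Fin.sum_univ_four,
      mul_zero, zero_add, add_zero, mul_one] at h0 h1 h2 hw
    have hw3 : w 3 = 0 := by
      have h2' : w 3 * (n : ℝ) = 0 := by linarith
      exact (mul_eq_zero.1 h2').resolve_right hn'
    have hw1 : w 1 = 0 := by rw [hw3] at h0; linarith [h0]
    have hw2 : w 2 = 0 := by rw [hw3] at h1; linarith [h1]
    have hw0 : w 0 = 0 := by rw [hw1, hw2, hw3] at hw; linarith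
    intro i
    fin_cases i <;> assumption

lemma stdTet_coord (a b : ℤ) {n : ℤ} (hn : n ≠ 0) (x : Fin 3 → ℝ) (j : Fin 4) :
    (tetBasis (stdTet_latticeTet a b hn)).coord j x = stdW a b n x j :=
  coord_eq (stdTet_latticeTet a b hn) (stdW a b n x) x (sum_stdW a b n hn x)
    (comb_stdW a b n hn x) j

end Std

section Clean
open Stmt2Aux

variable {a b n : ℤ}

lemma stdW0 (x : Fin 3 → ℝ) : stdW a b n x 0 = 1 - x 0 - x 1 + x 2 * ((a : ℝ) + b - 1) / n := rfl
lemma stdW1 (x : Fin 3 → ℝ) : stdW a b n x 1 = x 0 - x 2 * a / n := rfl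
lemma stdW2 (x : Fin 3 → ℝ) : stdW a b n x 2 = x 1 - x 2 * b / n := rfl
lemma stdW3 (x : Fin 3 → ℝ) : stdW a b n x 3 = x 2 / n := rfl

lemma icast_apply (z : Fin 3 → ℤ) (i : Fin 3) : icast z i = (z i : ℝ) := rfl

lemma endgame (a b : ℤ) {n : ℤ} (hn : 0 < n) (z : Fin 3 → ℤ)
    (hmem : ∀ i, 0 ≤ stdW a b n (icast z) i) (hdvd : n ∣ z 2) :
    icast z ∈ Set.range (stdTet a b n) := by
  have hn' : (0 : ℝ) < (n : ℝ) := by exact_mod_cast hn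
  have h3 := hmem 3; have h1 := hmem 1; have h2 := hmem 2; have h0 := hmem 0
  rw [stdW3, icast_apply] at h3
  rw [stdW1] at h1; rw [stdW2] at h2; rw [stdW0] at h0
  simp only [icast_apply] at h0 h1 h2
  -- 0 ≤ z 2
  have hz2_nonneg : 0 ≤ z 2 := by
    have : (0 : ℝ) ≤ (z 2 : ℝ) := by
      have := mul_le_mul_of_nonneg_right h3 hn'.le
      simpa [div_mul_cancel₀, hn'.ne'] using this
    exact_mod_cast this
  have hz2_le : z 2 ≤ n := by
    have hsum1 : stdW a b n (icast z) 0 + stdW a b n (icast z) 1 + stdW a b n (icast z) 2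
        + stdW a b n (icast z) 3 = 1 := by
      have := sum_stdW a b n hn.ne' (icast z)
      rwa [Fin.sum_univ_four] at this
    rw [stdW0, stdW1, stdW2, stdW3] at hsum1
    simp only [icast_apply] at hsum1
    have hsum : (z 2 : ℝ) / n ≤ 1 := by linarith
    have : (z 2 : ℝ) ≤ (n : ℝ) := by
      have := mul_le_mul_of_nonneg_right hsum hn'.le
      simpa [div_mul_cancel₀, hn'.ne'] using this
    exact_mod_cast this
  have hz2 : z 2 = 0 ∨ z 2 = n := by
    rcases hdvd with ⟨k, hk⟩
    have hk0 : 0 ≤ k := by nlinarith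
    have hk1 : k ≤ 1 := by nlinarith
    interval_cases k
    · left; omega
    · right; omega
  rcases hz2 with hz2 | hz2
  · -- base triangle
    rw [hz2] at h0 h1 h2
    simp only [Int.cast_zero, zero_mul, zero_div, sub_zero, add_zero] at h0 h1 h2
    have hi0 : (0 : ℤ) ≤ z 0 := by exact_mod_cast h1
    have hi1 : (0 : ℤ) ≤ z 1 := by exact_mod_cast h2
    have hi2 : z 0 + z 1 ≤ 1 := by
      have : (z 0 : ℝ) + z 1 ≤ 1 := by linarith
      exact_mod_cast this
    have hz0le : z 0 ≤ 1 := by omega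
    interval_cases h : z 0
    · have : z 1 = 0 ∨ z 1 = 1 := by omega
      rcases this with h1' | h1'
      · exact ⟨0, by funext i; fin_cases i <;> simp [stdTet, icast, h, h1', hz2]⟩
      · exact ⟨2, by funext i; fin_cases i <;> simp [stdTet, icast, h, h1', hz2]⟩
    · have h1' : z 1 = 0 := by omega
      exact ⟨1, by funext i; fin_cases i <;> simp [stdTet, icast, h, h1', hz2]⟩
  · -- apex
    rw [hz2] at h0 h1 h2
    have e1 : (z 0 : ℝ) - a ≥ 0 := by
      have : (n : ℝ) * a / n = a := by field_simp
      rw [show ((n : ℤ) : ℝ) * (a : ℝ) / n = (a : ℝ) from this] at h1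
      linarith
    have e2 : (z 1 : ℝ) - b ≥ 0 := by
      have : (n : ℝ) * b / n = b := by field_simp
      rw [show ((n : ℤ) : ℝ) * (b : ℝ) / n = (b : ℝ) from this] at h2
      linarith
    have e0 : 1 - (z 0 : ℝ) - z 1 + (a + b - 1) ≥ 0 := by
      have : (n : ℝ) * ((a : ℝ) + b - 1) / n = (a : ℝ) + b - 1 := by field_simp
      rw [show ((n : ℤ) : ℝ) * ((a : ℝ) + (b : ℝ) - 1) / n = (a : ℝ) + (b : ℝ) - 1 from this] at h0
      linarith
    have hz0 : z 0 = a := by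
      have l1 : (a : ℝ) ≤ z 0 := by linarith
      have l2 : (z 0 : ℝ) ≤ a := by linarith
      have : (z 0 : ℝ) = a := le_antisymm l2 l1
      exact_mod_cast this
    have hz1 : z 1 = b := by
      have l1 : (b : ℝ) ≤ z 1 := by linarith
      have l2 : (z 1 : ℝ) ≤ b := by
        rw [hz0] at e0; linarith
      have : (z 1 : ℝ) = b := le_antisymm l2 l1
      exact_mod_cast this
    exact ⟨3, by funext i; fin_cases i <;> simp [stdTet, icast, hz0, hz1, hz2]⟩

lemma clean_stdTet (a b : ℤ) {n : ℤ} (hn : 0 < n) (h1 : Int.gcd a n = 1)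
    (h2 : Int.gcd b n = 1) (h3 : Int.gcd (1 - a - b) n = 1) : CleanTet (stdTet a b n) := by
  intro x hx hlat
  obtain ⟨z, rfl⟩ := exists_icast hlat
  rw [frontier_tetSet (stdTet_latticeTet a b hn.ne')] at hx
  obtain ⟨h0, j, hj⟩ := hx
  simp only [stdTet_coord a b hn.ne'] at h0 hj
  have hn' : (0 : ℝ) < (n : ℝ) := by exact_mod_cast hn
  have key : ∀ c : ℤ, Int.gcd c n = 1 → n ∣ z 2 * c → n ∣ z 2 := by
    intro c hc hdc
    have hcop : IsCoprime (n : ℤ) c := by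
      rw [Int.isCoprime_iff_gcd_eq_one, Int.gcd_comm]
      exact hc
    exact hcop.dvd_of_dvd_mul_right hdc
  have hdvd : n ∣ z 2 := by
    fin_cases j
    · -- w0 = 0
      replace hj : stdW a b n (icast z) 0 = 0 := hj
      rw [stdW0] at hj
      simp only [icast_apply] at hj
      have := key (a + b - 1) (by rw [show a + b - 1 = -(1 - a - b) by ring, Int.neg_gcd]; exact h3)
      apply this
      have hr : (z 2 : ℝ) * ((a : ℝ) + b - 1) = (z 0 + z 1 - 1) * n := by
        field_simp at hj
        nlinarith [hj]
      have : (z 2 * (a + b - 1) : ℤ) = (z 0 + z 1 - 1) * n := by exact_mod_cast hr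
      exact ⟨z 0 + z 1 - 1, by linarith [this]⟩
    · -- w1 = 0
      replace hj : stdW a b n (icast z) 1 = 0 := hj
      rw [stdW1] at hj
      simp only [icast_apply] at hj
      apply key a h1
      have hr : (z 2 : ℝ) * (a : ℝ) = (z 0) * n := by
        field_simp at hj
        nlinarith [hj]
      have : (z 2 * a : ℤ) = z 0 * n := by exact_mod_cast hr
      exact ⟨z 0, by linarith [this]⟩
    · -- w2 = 0
      replace hj : stdW a b n (icast z) 2 = 0 := hj
      rw [stdW2] at hj
      simp only [icast_apply] at hj
      apply key b h2
      have hr : (z 2 : ℝ) * (b : ℝ) = (z 1) * n := by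
        field_simp at hj
        nlinarith [hj]
      have : (z 2 * b : ℤ) = z 1 * n := by exact_mod_cast hr
      exact ⟨z 1, by linarith [this]⟩
    · -- w3 = 0
      replace hj : stdW a b n (icast z) 3 = 0 := hj
      rw [stdW3, icast_apply] at hj
      have hz : z 2 = 0 := by
        field_simp at hj
        simpa using hj
      exact ⟨0, by omega⟩
  exact endgame a b hn z h0 hdvd

end Clean

section GcdOfClean
open Stmt2Aux

lemma not_clean_aux (a b : ℤ) {n : ℤ} (hn : 0 < n) (z : Fin 3 → ℤ)
    (hmem : ∀ i, 0 ≤ stdW a b n (icast z) i) (j : Fin 4)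
    (hj : stdW a b n (icast z) j = 0) (hz2 : z 2 ≠ 0) (hz2' : z 2 ≠ n) :
    ¬ CleanTet (stdTet a b n) := by
  intro hc
  have hx : icast z ∈ frontier (tetSet (stdTet a b n)) := by
    rw [frontier_tetSet (stdTet_latticeTet a b hn.ne')]
    exact ⟨fun i => by rw [stdTet_coord a b hn.ne']; exact hmem i, j,
      by rw [stdTet_coord a b hn.ne']; exact hj⟩
  obtain ⟨k, hk⟩ := hc _ hx (isLatticePoint_icast z)
  have h2 := congrFun hk 2
  have hcase : stdTet a b n k 2 = 0 ∨ stdTet a b n k 2 = (n : ℝ) := by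
    fin_cases k <;> simp [stdTet]
  rw [h2] at hcase
  rw [icast_apply] at hcase
  rcases hcase with h | h
  · exact hz2 (by exact_mod_cast h)
  · exact hz2' (by exact_mod_cast h)

lemma gcd_pos_facts {b n : ℤ} (hn : 2 ≤ n) (hg : Int.gcd b n ≠ 1) :
    2 ≤ (Int.gcd b n : ℤ) := by
  have h1 : (Int.gcd b n : ℤ) ≠ 1 := fun h => hg (by exact_mod_cast h)
  have h0 : (Int.gcd b n : ℤ) ≠ 0 := by
    intro h
    have : Int.gcd b n = 0 := by exact_mod_cast h
    have := (Int.gcd_eq_zero_iff.1 this).2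
    omega
  have : 0 ≤ (Int.gcd b n : ℤ) := Int.natCast_nonneg _
  omega

lemma gcd_b_of_clean (a b : ℤ) {n : ℤ} (hn : 2 ≤ n) (hc : CleanTet (stdTet a b n)) :
    Int.gcd b n = 1 := by
  by_contra hg
  have hn0 : (0 : ℤ) < n := by omega
  set d : ℤ := (Int.gcd b n : ℤ) with hd
  have hd2 : 2 ≤ d := gcd_pos_facts hn hg
  obtain ⟨n', hn'⟩ : d ∣ n := Int.gcd_dvd_right _ _
  obtain ⟨b', hb'⟩ : d ∣ b := Int.gcd_dvd_left _ _
  have hn'pos : 0 < n' := by nlinarith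
  set q := (-a) / d with hq
  set m := (-a) % d with hmdef
  have hm : d * q + m = -a := Int.mul_ediv_add_emod (-a) d
  have hm0 : 0 ≤ m := Int.emod_nonneg _ (by omega)
  have hm1 : m < d := Int.emod_lt_of_pos _ (by omega)
  set z : Fin 3 → ℤ := ![-q, b', n'] with hz
  have hdR : (0 : ℝ) < (d : ℝ) := by exact_mod_cast (by omega : (0:ℤ) < d)
  have hn'R : (0 : ℝ) < (n' : ℝ) := by exact_mod_cast hn'pos
  have hnR : (n : ℝ) = (d : ℝ) * (n' : ℝ) := by exact_mod_cast hn'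
  have hbR : (b : ℝ) = (d : ℝ) * (b' : ℝ) := by exact_mod_cast hb'
  have haR : (a : ℝ) = -((d : ℝ) * (q : ℝ)) - (m : ℝ) := by
    have : (d : ℝ) * (q : ℝ) + (m : ℝ) = -(a : ℝ) := by exact_mod_cast hm
    linarith
  have hz0 : icast z 0 = -(q : ℝ) := by simp [icast, hz]
  have hz1 : icast z 1 = (b' : ℝ) := by simp [icast, hz]
  have hz2v : icast z 2 = (n' : ℝ) := by simp [icast, hz]
  have key : ∀ c : ℝ, (n' : ℝ) * c / ((d : ℝ) * (n' : ℝ)) = c / d := by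
    intro c
    rw [mul_comm ((n' : ℝ)) c, mul_comm ((d : ℝ)) ((n' : ℝ)), ← div_div,
      mul_div_assoc, div_self hn'R.ne', mul_one]
  have w0v : stdW a b n (icast z) 0 = 1 - ((m : ℝ) + 1) / d := by
    rw [stdW0, hz0, hz1, hz2v, hnR, key, haR, hbR]
    field_simp
    ring
  have w1v : stdW a b n (icast z) 1 = (m : ℝ) / d := by
    rw [stdW1, hz0, hz2v, hnR, key, haR]
    field_simp
    ring
  have w2v : stdW a b n (icast z) 2 = 0 := by
    rw [stdW2, hz1, hz2v, hnR, key, hbR]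
    field_simp
    ring
  have w3v : stdW a b n (icast z) 3 = 1 / d := by
    rw [stdW3, hz2v, hnR, mul_comm, ← div_div, div_self hn'R.ne']
  have hmd : ((m : ℝ) + 1) / d ≤ 1 := by
    rw [div_le_one hdR]
    exact_mod_cast (by omega : m + 1 ≤ d)
  have hm0R : (0 : ℝ) ≤ (m : ℝ) := by exact_mod_cast hm0
  have hmem : ∀ i, 0 ≤ stdW a b n (icast z) i := by
    intro i
    fin_cases i
    · show (0:ℝ) ≤ stdW a b n (icast z) 0
      rw [w0v]; linarith
    · show (0:ℝ) ≤ stdW a b n (icast z) 1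
      rw [w1v]; positivity
    · show (0:ℝ) ≤ stdW a b n (icast z) 2
      rw [w2v]
    · show (0:ℝ) ≤ stdW a b n (icast z) 3
      rw [w3v]; positivity
  have hz2a : z 2 = n' := rfl
  refine not_clean_aux a b hn0 z hmem 2 w2v ?_ ?_ hc
  · rw [hz2a]; omega
  · rw [hz2a]; intro h; nlinarith
end GcdOfClean

section GcdOfClean2
open Stmt2Aux

lemma tetEquiv_of_perm {v v' : Fin 4 → Fin 3 → ℝ} (M : Matrix (Fin 3) (Fin 3) ℤ)
    (u : Fin 3 → ℤ) (hM : IsUni M) (σ : Equiv.Perm (Fin 4))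
    (hv : ∀ j, affMap M u (v j) = v' (σ j)) : TetEquiv v v' := by
  refine ⟨M, hM, u, ?_⟩
  rw [← Set.range_comp, show (affMap M u ∘ v) = v' ∘ σ from funext hv]
  exact σ.surjective.range_comp v'

lemma stdTet_swap (a b n : ℤ) : TetEquiv (stdTet a b n) (stdTet b a n) := by
  apply tetEquiv_of_perm (M := ![![0,1,0],![1,0,0],![0,0,1]]) (u := 0)
    (σ := Equiv.swap 1 2)
  · right
    erw [Matrix.det_fin_three]; simp
  · intro j
    fin_cases j
    · show affMap _ 0 (stdTet a b n 0) = stdTet b a n ((Equiv.swap 1 2) 0)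
      rw [show (Equiv.swap (1 : Fin 4) 2) 0 = 0 by decide]
      funext i; fin_cases i <;> simp [affMap, Fin.sum_univ_three, stdTet]
    · show affMap _ 0 (stdTet a b n 1) = stdTet b a n ((Equiv.swap 1 2) 1)
      rw [show (Equiv.swap (1 : Fin 4) 2) 1 = 2 by decide]
      funext i; fin_cases i <;> simp [affMap, Fin.sum_univ_three, stdTet]
    · show affMap _ 0 (stdTet a b n 2) = stdTet b a n ((Equiv.swap 1 2) 2)
      rw [show (Equiv.swap (1 : Fin 4) 2) 2 = 1 by decide]
      funext i; fin_cases i <;> simp [affMap, Fin.sum_univ_three, stdTet]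
    · show affMap _ 0 (stdTet a b n 3) = stdTet b a n ((Equiv.swap 1 2) 3)
      rw [show (Equiv.swap (1 : Fin 4) 2) 3 = 3 by decide]
      funext i; fin_cases i <;> simp [affMap, Fin.sum_univ_three, stdTet]

lemma gcd_a_of_clean (a b : ℤ) {n : ℤ} (hn : 2 ≤ n) (hc : CleanTet (stdTet a b n)) :
    Int.gcd a n = 1 :=
  gcd_b_of_clean b a hn (cleanTet_of_tetEquiv (stdTet_swap a b n) hc)

lemma gcd_c_of_clean (a b : ℤ) {n : ℤ} (hn : 2 ≤ n) (hc : CleanTet (stdTet a b n)) :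
    Int.gcd (1 - a - b) n = 1 := by
  by_contra hg
  have hn0 : (0 : ℤ) < n := by omega
  set d : ℤ := (Int.gcd (1 - a - b) n : ℤ) with hd
  have hd2 : 2 ≤ d := gcd_pos_facts hn hg
  obtain ⟨n', hn'⟩ : d ∣ n := Int.gcd_dvd_right _ _
  obtain ⟨c', hc'⟩ : d ∣ (1 - a - b) := Int.gcd_dvd_left _ _
  have hn'pos : 0 < n' := by nlinarith
  set q := (-a) / d with hq
  set m := (-a) % d with hmdef
  have hm : d * q + m = -a := Int.mul_ediv_add_emod (-a) d
  have hm0 : 0 ≤ m := Int.emod_nonneg _ (by omega)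
  have hm1 : m < d := Int.emod_lt_of_pos _ (by omega)
  set z : Fin 3 → ℤ := ![-q, 1 - c' + q, n'] with hz
  have hdR : (0 : ℝ) < (d : ℝ) := by exact_mod_cast (by omega : (0:ℤ) < d)
  have hn'R : (0 : ℝ) < (n' : ℝ) := by exact_mod_cast hn'pos
  have hnR : (n : ℝ) = (d : ℝ) * (n' : ℝ) := by exact_mod_cast hn'
  have hbR : (b : ℝ) = 1 - (a : ℝ) - (d : ℝ) * (c' : ℝ) := by
    have : ((1 - a - b : ℤ) : ℝ) = ((d * c' : ℤ) : ℝ) := by rw [hc']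
    push_cast at this
    linarith
  have haR : (a : ℝ) = -((d : ℝ) * (q : ℝ)) - (m : ℝ) := by
    have : (d : ℝ) * (q : ℝ) + (m : ℝ) = -(a : ℝ) := by exact_mod_cast hm
    linarith
  have hz0 : icast z 0 = -(q : ℝ) := by simp [icast, hz]
  have hz1 : icast z 1 = 1 - (c' : ℝ) + (q : ℝ) := by simp [icast, hz]
  have hz2v : icast z 2 = (n' : ℝ) := by simp [icast, hz]
  have key : ∀ c : ℝ, (n' : ℝ) * c / ((d : ℝ) * (n' : ℝ)) = c / d := by
    intro c
    rw [mul_comm ((n' : ℝ)) c, mul_comm ((d : ℝ)) ((n' : ℝ)), ← div_div,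
      mul_div_assoc, div_self hn'R.ne', mul_one]
  have w0v : stdW a b n (icast z) 0 = 0 := by
    rw [stdW0, hz0, hz1, hz2v, hnR, key]
    field_simp
    all_goals linarith [haR, hbR]
  have w1v : stdW a b n (icast z) 1 = (m : ℝ) / d := by
    rw [stdW1, hz0, hz2v, hnR, key]
    field_simp
    linarith [haR, hbR]
  have w2v : stdW a b n (icast z) 2 = 1 - ((m : ℝ) + 1) / d := by
    rw [stdW2, hz1, hz2v, hnR, key]
    field_simp
    linarith [haR, hbR]
  have w3v : stdW a b n (icast z) 3 = 1 / d := by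
    rw [stdW3, hz2v, hnR, mul_comm, ← div_div, div_self hn'R.ne']
  have hmd : ((m : ℝ) + 1) / d ≤ 1 := by
    rw [div_le_one hdR]
    exact_mod_cast (by omega : m + 1 ≤ d)
  have hm0R : (0 : ℝ) ≤ (m : ℝ) := by exact_mod_cast hm0
  have hmem : ∀ i, 0 ≤ stdW a b n (icast z) i := by
    intro i
    fin_cases i
    · show (0:ℝ) ≤ stdW a b n (icast z) 0
      rw [w0v]
    · show (0:ℝ) ≤ stdW a b n (icast z) 1
      rw [w1v]; positivity
    · show (0:ℝ) ≤ stdW a b n (icast z) 2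
      rw [w2v]; linarith
    · show (0:ℝ) ≤ stdW a b n (icast z) 3
      rw [w3v]; positivity
  have hz2a : z 2 = n' := rfl
  refine not_clean_aux a b hn0 z hmem 0 w0v ?_ ?_ hc
  · rw [hz2a]; omega
  · rw [hz2a]; intro h; nlinarith
end GcdOfClean2

section Forward
open Stmt2Aux

lemma icast_add (A B : Fin 3 → ℤ) : icast (A + B) = icast A + icast B := by
  funext i; simp [icast]

lemma icast_sub (A B : Fin 3 → ℤ) : icast (A - B) = icast A - icast B := by
  funext i; simp [icast]

lemma icast_smul (m : ℤ) (A : Fin 3 → ℤ) : icast (m • A) = (m : ℝ) • icast A := by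
  funext i; simp [icast]

variable {v : Fin 4 → Fin 3 → ℝ}

lemma exists_ivertices (h : IsLatticeTet v) : ∃ V : Fin 4 → Fin 3 → ℤ, ∀ j, v j = icast (V j) := by
  have := fun j => exists_icast (h.1 j)
  choose V hV using this
  exact ⟨V, hV⟩

lemma lin_indep_diffs (h : IsLatticeTet v) (α β γ : ℝ)
    (hsum : α • (v 1 - v 0) + β • (v 2 - v 0) + γ • (v 3 - v 0) = 0) :
    α = 0 ∧ β = 0 ∧ γ = 0 := by
  have key := affineIndependent_iff.1 h.2 Finset.univ ![-(α + β + γ), α, β, γ]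
  have hsum0 : (Finset.univ : Finset (Fin 4)).sum ![-(α + β + γ), α, β, γ] = 0 := by
    simp [Fin.sum_univ_four]; ring
  have hcomb : ∑ e, (![-(α + β + γ), α, β, γ]) e • v e = 0 := by
    rw [show (∑ e, (![-(α + β + γ), α, β, γ]) e • v e)
        = α • (v 1 - v 0) + β • (v 2 - v 0) + γ • (v 3 - v 0) by
      simp only [Fin.sum_univ_four, Matrix.cons_val_zero, Matrix.cons_val_one, Matrix.head_cons,
        Matrix.cons_val_two, Matrix.tail_cons, Matrix.cons_val_three]
      module]
    exact hsum
  have := key hsum0 hcomb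
  refine ⟨?_, ?_, ?_⟩
  · have := this 1 (Finset.mem_univ _); simpa using this
  · have := this 2 (Finset.mem_univ _); simpa using this
  · have := this 3 (Finset.mem_univ _); simpa using this

lemma face_empty (h : IsLatticeTet v) (hc : CleanTet v) (s t : ℝ)
    (hs : 0 ≤ s) (ht : 0 ≤ t) (hst : s + t ≤ 1)
    (hlat : IsLatticePoint (v 0 + s • (v 1 - v 0) + t • (v 2 - v 0))) :
    (s = 0 ∧ t = 0) ∨ (s = 1 ∧ t = 0) ∨ (s = 0 ∧ t = 1) := by
  set x := v 0 + s • (v 1 - v 0) + t • (v 2 - v 0) with hxdef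
  set w : Fin 4 → ℝ := ![1 - s - t, s, t, 0] with hw
  have hsum : ∑ i, w i = 1 := by simp [hw, Fin.sum_univ_four]; ring
  have hnn : ∀ i, 0 ≤ w i := by
    intro i
    fin_cases i
    · show (0:ℝ) ≤ 1 - s - t; linarith
    · exact hs
    · exact ht
    · exact le_refl 0
  have hxc : x = ∑ i, w i • v i := by
    rw [hxdef, hw]
    simp only [Fin.sum_univ_four, Matrix.cons_val_zero, Matrix.cons_val_one, Matrix.head_cons,
      Matrix.cons_val_two, Matrix.tail_cons, Matrix.cons_val_three]
    module
  have hmem : x ∈ frontier (tetSet v) := mem_frontier_of h w x hsum hnn hxc 3 rfl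
  obtain ⟨k, hk⟩ := hc x hmem hlat
  have hcoord : ∀ j, w j = if j = k then 1 else 0 := by
    intro j
    rw [← coord_eq h w x hsum hxc j, ← hk, coord_vertex h j k]
  fin_cases k
  · left
    constructor
    · have := hcoord 1; simpa [hw] using this
    · have := hcoord 2; simpa [hw] using this
  · right; left
    constructor
    · have := hcoord 1; simpa [hw] using this
    · have := hcoord 2; simpa [hw] using this
  · right; right
    constructor
    · have := hcoord 1; simpa [hw] using this
    · have := hcoord 2; simpa [hw] using this
  · exfalso
    have := hcoord 3
    simp [hw] at this

end Forward

section Saturation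
open Stmt2Aux

variable {v : Fin 4 → Fin 3 → ℝ}

lemma saturation (h : IsLatticeTet v) (hc : CleanTet v) {V : Fin 4 → Fin 3 → ℤ}
    (hV : ∀ j, v j = icast (V j)) (z : Fin 3 → ℤ) (α β : ℝ)
    (hz : icast z = α • (v 1 - v 0) + β • (v 2 - v 0)) :
    ∃ p q : ℤ, α = p ∧ β = q := by
  have hVc : ∀ j, icast (V j) = v j := fun j => (hV j).symm
  set s : ℝ := α - ⌊α⌋ with hsdef
  set t : ℝ := β - ⌊β⌋ with htdef
  have hs0 : 0 ≤ s := by rw [hsdef]; linarith [Int.floor_le α]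
  have hs1 : s < 1 := by rw [hsdef]; linarith [Int.lt_floor_add_one α]
  have ht0 : 0 ≤ t := by rw [htdef]; linarith [Int.floor_le β]
  have ht1 : t < 1 := by rw [htdef]; linarith [Int.lt_floor_add_one β]
  by_cases hcase : s + t ≤ 1
  · have hlat : IsLatticePoint (v 0 + s • (v 1 - v 0) + t • (v 2 - v 0)) := by
      have key : v 0 + s • (v 1 - v 0) + t • (v 2 - v 0)
          = icast (V 0 + (z - ⌊α⌋ • (V 1 - V 0) - ⌊β⌋ • (V 2 - V 0))) := by
        simp only [icast_add, icast_sub, icast_smul, hVc, hz, hsdef, htdef]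
        module
      rw [key]
      exact isLatticePoint_icast _
    rcases face_empty h hc s t hs0 ht0 hcase hlat with ⟨h1, h2⟩ | ⟨h1, _⟩ | ⟨_, h2⟩
    · refine ⟨⌊α⌋, ⌊β⌋, ?_, ?_⟩
      · have : s = 0 := h1; rw [hsdef] at this; linarith
      · have : t = 0 := h2; rw [htdef] at this; linarith
    · exact absurd h1 (by linarith)
    · exact absurd h2 (by linarith)
  · push_neg at hcase
    have hlat : IsLatticePoint (v 0 + (1 - s) • (v 1 - v 0) + (1 - t) • (v 2 - v 0)) := by
      have key : v 0 + (1 - s) • (v 1 - v 0) + (1 - t) • (v 2 - v 0)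
          = icast (V 0 + ((V 1 - V 0) + (V 2 - V 0)
              - (z - ⌊α⌋ • (V 1 - V 0) - ⌊β⌋ • (V 2 - V 0)))) := by
        simp only [icast_add, icast_sub, icast_smul, hVc, hz, hsdef, htdef]
        module
      rw [key]
      exact isLatticePoint_icast _
    rcases face_empty h hc (1 - s) (1 - t) (by linarith) (by linarith) (by linarith) hlat with
      ⟨h1, h2⟩ | ⟨h1, h2⟩ | ⟨h1, h2⟩
    · exact absurd h1 (by intro hh; apply absurd hcase; push_neg; nlinarith)
    · exact absurd h2 (by intro hh; apply absurd hcase; push_neg; nlinarith)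
    · exact absurd h1 (by intro hh; apply absurd hcase; push_neg; nlinarith)
end Saturation

section Cross
open Stmt2Aux

/-- cross product of integer vectors -/
def crossZ (u w : Fin 3 → ℤ) : Fin 3 → ℤ :=
  ![u 1 * w 2 - u 2 * w 1, u 2 * w 0 - u 0 * w 2, u 0 * w 1 - u 1 * w 0]

lemma crossZ0 (u w : Fin 3 → ℤ) : crossZ u w 0 = u 1 * w 2 - u 2 * w 1 := rfl
lemma crossZ1 (u w : Fin 3 → ℤ) : crossZ u w 1 = u 2 * w 0 - u 0 * w 2 := rfl
lemma crossZ2 (u w : Fin 3 → ℤ) : crossZ u w 2 = u 0 * w 1 - u 1 * w 0 := rfl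

lemma det_rows (u w T : Fin 3 → ℤ) :
    (Matrix.of ![u, w, T]).det
      = crossZ u w 0 * T 0 + crossZ u w 1 * T 1 + crossZ u w 2 * T 2 := by
  rw [Matrix.det_fin_three]
  simp only [Matrix.of_apply, Matrix.cons_val_zero, Matrix.cons_val_one, Matrix.head_cons,
    Matrix.cons_val_two, Matrix.tail_cons, crossZ]
  ring

lemma int_div_cast {p y : ℤ} (hp : p ≠ 0) (h : p ∣ y) : ((y / p : ℤ) : ℝ) = (y : ℝ) / (p : ℝ) := by
  obtain ⟨k, rfl⟩ := h
  rw [Int.mul_ediv_cancel_left _ hp]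
  have hpR : (p : ℝ) ≠ 0 := Int.cast_ne_zero.2 hp
  push_cast
  rw [mul_comm, mul_div_assoc, div_self hpR, mul_one]

lemma minor_dvd {p : ℤ} {u w : Fin 3 → ℤ}
    (h0 : p ∣ u 1 * w 2 - u 2 * w 1) (h1 : p ∣ u 2 * w 0 - u 0 * w 2)
    (h2 : p ∣ u 0 * w 1 - u 1 * w 0) (i j : Fin 3) :
    p ∣ (w i * u j - u i * w j) := by
  obtain ⟨k0, hk0⟩ := h0
  obtain ⟨k1, hk1⟩ := h1
  obtain ⟨k2, hk2⟩ := h2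
  fin_cases i <;> fin_cases j <;>
    first
      | exact (show p ∣ w 0 * u 0 - u 0 * w 0 from ⟨0, by ring⟩)
      | exact (show p ∣ w 1 * u 1 - u 1 * w 1 from ⟨0, by ring⟩)
      | exact (show p ∣ w 2 * u 2 - u 2 * w 2 from ⟨0, by ring⟩)
      | exact (show p ∣ w 0 * u 1 - u 0 * w 1 from ⟨-k2, by linarith [hk2]⟩)
      | exact (show p ∣ w 0 * u 2 - u 0 * w 2 from ⟨k1, by linarith [hk1]⟩)
      | exact (show p ∣ w 1 * u 0 - u 1 * w 0 from ⟨k2, by linarith [hk2]⟩)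
      | exact (show p ∣ w 1 * u 2 - u 1 * w 2 from ⟨-k0, by linarith [hk0]⟩)
      | exact (show p ∣ w 2 * u 0 - u 2 * w 0 from ⟨-k1, by linarith [hk1]⟩)
      | exact (show p ∣ w 2 * u 1 - u 2 * w 1 from ⟨k0, by linarith [hk0]⟩)

variable {v : Fin 4 → Fin 3 → ℝ}

lemma pair_indep (h : IsLatticeTet v) (α β : ℝ)
    (hαβ : α • (v 1 - v 0) + β • (v 2 - v 0) = 0) : α = 0 ∧ β = 0 := by
  have := lin_indep_diffs h α β 0 (by rw [zero_smul, add_zero]; exact hαβ)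
  exact ⟨this.1, this.2.1⟩

lemma cross_primitive (h : IsLatticeTet v) (hc : CleanTet v) {V : Fin 4 → Fin 3 → ℤ}
    (hV : ∀ j, v j = icast (V j)) :
    Int.gcd (Int.gcd (crossZ (V 1 - V 0) (V 2 - V 0) 0) (crossZ (V 1 - V 0) (V 2 - V 0) 1))
      (crossZ (V 1 - V 0) (V 2 - V 0) 2) = 1 := by
  set u : Fin 3 → ℤ := V 1 - V 0 with hu
  set w : Fin 3 → ℤ := V 2 - V 0 with hw
  have hVc : ∀ j, icast (V j) = v j := fun j => (hV j).symm
  have huc : icast u = v 1 - v 0 := by rw [hu, icast_sub, hVc, hVc]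
  have hwc : icast w = v 2 - v 0 := by rw [hw, icast_sub, hVc, hVc]
  by_contra hg
  set g : ℕ := Int.gcd (Int.gcd (crossZ u w 0) (crossZ u w 1)) (crossZ u w 2) with hgdef
  -- generic step: any common divisor p of the cross coords with (p:ℤ) "dividing exactly"
  -- leads to contradiction unless p is a unit.
  have main : ∀ p : ℤ, 2 ≤ p → p ∣ crossZ u w 0 → p ∣ crossZ u w 1 → p ∣ crossZ u w 2 → False := by
    intro p hp2 hp0 hp1 hp2'
    rw [crossZ0] at hp0
    rw [crossZ1] at hp1
    rw [crossZ2] at hp2'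
    have hpne : p ≠ 0 := by omega
    have hppos : (0:ℝ) < (p:ℝ) := by exact_mod_cast (by omega : (0:ℤ) < p)
    by_cases hcase : ∀ i, p ∣ u i
    · set z : Fin 3 → ℤ := fun j => u j / p with hz
      have hicast : icast z = ((1 : ℝ)/(p:ℝ)) • (v 1 - v 0) + (0:ℝ) • (v 2 - v 0) := by
        rw [← huc, ← hwc]
        funext j
        simp only [Pi.add_apply, Pi.smul_apply, smul_eq_mul, icast, Pi.zero_apply, hz]
        rw [int_div_cast hpne (hcase j)]
        ring
      obtain ⟨m, _, hm, _⟩ := saturation h hc hV z _ _ hicast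
      have h1R : (1:ℝ) = m * p := by
        field_simp at hm
        linarith [hm]
      have hmz : (1:ℤ) = m * p := by exact_mod_cast h1R
      have : p ∣ 1 := ⟨m, by linarith⟩
      have := Int.le_of_dvd one_pos this
      omega
    · push_neg at hcase
      obtain ⟨i, hi⟩ := hcase
      have hdvd := minor_dvd hp0 hp1 hp2' i
      set z : Fin 3 → ℤ := fun j => (w i * u j - u i * w j) / p with hz
      have hicast : icast z = ((w i : ℝ)/(p:ℝ)) • (v 1 - v 0) + (-(u i : ℝ)/(p:ℝ)) • (v 2 - v 0) := by
        rw [← huc, ← hwc]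
        funext j
        simp only [Pi.add_apply, Pi.smul_apply, smul_eq_mul, icast, hz]
        rw [int_div_cast hpne (hdvd j)]
        push_cast
        ring
      obtain ⟨m, k, _, hk⟩ := saturation h hc hV z _ _ hicast
      have hkR : -(u i : ℝ) = k * p := by
        field_simp at hk
        linarith [hk]
      have hmz : -(u i) = k * p := by exact_mod_cast hkR
      exact hi ⟨-k, by linarith⟩
  -- g ≠ 0
  have hgne : g ≠ 0 := by
    intro h0
    rw [hgdef] at h0
    have h2 : crossZ u w 2 = 0 ∧ crossZ u w 0 = 0 ∧ crossZ u w 1 = 0 := by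
      have hA := Int.gcd_eq_zero_iff.1 h0
      have hB : Int.gcd (crossZ u w 0) (crossZ u w 1) = 0 := by exact_mod_cast hA.1
      have hC := Int.gcd_eq_zero_iff.1 hB
      exact ⟨hA.2, hC.1, hC.2⟩
    obtain ⟨hc2, hc0, hc1⟩ := h2
    by_cases hu0 : ∀ i, u i = 0
    · have hicast0 : icast u = 0 := by funext i; simp [icast, hu0 i]
      have h1 : (1 : ℝ) • (v 1 - v 0) + (0 : ℝ) • (v 2 - v 0) = 0 := by
        rw [← huc, hicast0]; simp
      exact one_ne_zero (pair_indep h 1 0 h1).1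
    · push_neg at hu0
      obtain ⟨i, hi⟩ := hu0
      have hdvd := minor_dvd (p := 0) (by rw [← crossZ0, hc0]) (by rw [← crossZ1, hc1])
        (by rw [← crossZ2, hc2]) i
      have hdep : ∀ j, w i * u j - u i * w j = 0 := fun j => zero_dvd_iff.1 (hdvd j)
      have hrel : ((w i : ℝ)) • (v 1 - v 0) + (-(u i : ℝ)) • (v 2 - v 0) = 0 := by
        rw [← huc, ← hwc]
        funext j
        simp only [Pi.add_apply, Pi.smul_apply, smul_eq_mul, icast, Pi.zero_apply, neg_mul]
        have hj : ((w i * u j - u i * w j : ℤ) : ℝ) = 0 := by rw [hdep j]; simp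
        push_cast at hj
        linarith [hj]
      have := (pair_indep h _ _ hrel).2
      have : (u i : ℝ) = 0 := by linarith
      exact hi (by exact_mod_cast this)
  obtain ⟨p, hp, hpg⟩ := Nat.exists_prime_and_dvd hg
  have hpdvd : (p:ℤ) ∣ (g:ℤ) := Int.natCast_dvd_natCast.2 hpg
  have h2 : (p:ℤ) ∣ crossZ u w 2 := dvd_trans hpdvd (by rw [hgdef]; exact Int.gcd_dvd_right _ _)
  have h01 : (p:ℤ) ∣ (Int.gcd (crossZ u w 0) (crossZ u w 1) : ℤ) :=
    dvd_trans hpdvd (by rw [hgdef]; exact Int.gcd_dvd_left _ _)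
  have h0 : (p:ℤ) ∣ crossZ u w 0 := dvd_trans h01 (Int.gcd_dvd_left _ _)
  have h1 : (p:ℤ) ∣ crossZ u w 1 := dvd_trans h01 (Int.gcd_dvd_right _ _)
  exact main (p:ℤ) (by exact_mod_cast hp.two_le) h0 h1 h2

lemma bezout3 {c0 c1 c2 : ℤ} (hg : Int.gcd (Int.gcd c0 c1) c2 = 1) :
    ∃ T : Fin 3 → ℤ, c0 * T 0 + c1 * T 1 + c2 * T 2 = 1 := by
  have h2 : ((Int.gcd (Int.gcd c0 c1) c2 : ℤ)) = (Int.gcd c0 c1 : ℤ) * Int.gcdA (Int.gcd c0 c1) c2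
      + c2 * Int.gcdB (Int.gcd c0 c1) c2 := Int.gcd_eq_gcd_ab _ _
  have h1 : ((Int.gcd c0 c1 : ℤ)) = c0 * Int.gcdA c0 c1 + c1 * Int.gcdB c0 c1 :=
    Int.gcd_eq_gcd_ab _ _
  refine ⟨![Int.gcdA c0 c1 * Int.gcdA (Int.gcd c0 c1) c2,
    Int.gcdB c0 c1 * Int.gcdA (Int.gcd c0 c1) c2, Int.gcdB (Int.gcd c0 c1) c2], ?_⟩
  simp only [Matrix.cons_val_zero, Matrix.cons_val_one, Matrix.head_cons, Matrix.cons_val_two,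
    Matrix.tail_cons]
  have key : (1 : ℤ) = (Int.gcd c0 c1 : ℤ) * Int.gcdA (Int.gcd c0 c1) c2
      + c2 * Int.gcdB (Int.gcd c0 c1) c2 := by
    rw [← h2, hg]
    norm_num
  linear_combination (-1 : ℤ) * key - ((c0.gcd c1 : ℤ)).gcdA c2 * h1
end Cross

section MainRed
open Stmt2Aux

variable {v : Fin 4 → Fin 3 → ℝ}

lemma stdTet_dep (a b : ℤ) : ¬ AffineIndependent ℝ (stdTet a b 0) := by
  intro hind
  have := affineIndependent_iff.1 hind Finset.univ ![1 - (a:ℝ) - b, a, b, -1]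
  have hsum : (Finset.univ : Finset (Fin 4)).sum ![1 - (a:ℝ) - b, a, b, -1] = 0 := by
    simp [Fin.sum_univ_four]; ring
  have hcomb : ∑ e, (![1 - (a:ℝ) - b, a, b, -1]) e • stdTet a b 0 e = 0 := by
    funext i
    simp only [Fin.sum_univ_four, Matrix.cons_val_zero, Matrix.cons_val_one, Matrix.head_cons,
      Matrix.cons_val_two, Matrix.tail_cons, Matrix.cons_val_three, stdTet,
      Pi.add_apply, Pi.smul_apply, smul_eq_mul, Pi.zero_apply]
    fin_cases i <;> norm_num
  have := this hsum hcomb 3 (Finset.mem_univ _)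
  simp at this

lemma main_reduction (h : IsLatticeTet v) (hc : CleanTet v) :
    ∃ a b n : ℤ, n ≠ 0 ∧ TetEquiv v (stdTet a b n) := by
  obtain ⟨V, hV⟩ := exists_ivertices h
  obtain ⟨T, hT⟩ := bezout3 (cross_primitive h hc hV)
  set u : Fin 3 → ℤ := V 1 - V 0 with hu
  set w : Fin 3 → ℤ := V 2 - V 0 with hw
  set A : Matrix (Fin 3) (Fin 3) ℤ := (Matrix.of ![u, w, T]).transpose with hA
  have hdet : A.det = 1 := by
    rw [hA, Matrix.det_transpose, det_rows]
    exact hT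
  set B := A.adjugate with hB
  have hBA : B * A = 1 := by rw [hB, Matrix.adjugate_mul, hdet]; simp
  have hAB : A * B = 1 := by rw [hB, Matrix.mul_adjugate, hdet]; simp
  have hdetB : B.det = 1 := by rw [hB, Matrix.det_adjugate, hdet]; norm_num
  have hcol : ∀ (k : Fin 3) (x : Fin 3 → ℤ), (∀ i, A i k = x i) →
      B.mulVec x = fun j => (1 : Matrix (Fin 3) (Fin 3) ℤ) j k := by
    intro k x hx
    funext j
    rw [Matrix.mulVec, dotProduct,
      show ∑ i, B j i * x i = ∑ i, B j i * A i k from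
        Finset.sum_congr rfl fun i _ => by rw [hx i],
      ← Matrix.mul_apply, hBA]
  have hBu : B.mulVec u = ![1, 0, 0] := by
    rw [hcol 0 u fun i => rfl]
    funext j
    fin_cases j <;> simp [Matrix.one_apply]
  have hBw : B.mulVec w = ![0, 1, 0] := by
    rw [hcol 1 w fun i => rfl]
    funext j
    fin_cases j <;> simp [Matrix.one_apply]
  set m3 : Fin 3 → ℤ := B.mulVec (V 3 - V 0) with hm3
  set uoff : Fin 3 → ℤ := -(B.mulVec (V 0)) with huoff
  have hfj : ∀ j, affMap B uoff (v j) = icast (B.mulVec (V j - V 0)) := by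
    intro j
    rw [hV j, affMap_icast]
    congr 1
    rw [Matrix.mulVec_sub, huoff]
    funext i
    simp [sub_eq_add_neg]
  set a : ℤ := m3 0 with ha
  set b : ℤ := m3 1 with hb
  set n : ℤ := m3 2 with hn
  have hstd : ∀ j, affMap B uoff (v j) = stdTet a b n j := by
    intro j
    rw [hfj j]
    fin_cases j
    · show icast (B.mulVec (V 0 - V 0)) = stdTet a b n 0
      rw [show V 0 - V 0 = 0 by simp, Matrix.mulVec_zero]
      funext i; fin_cases i <;> simp [stdTet, icast]
    · show icast (B.mulVec (V 1 - V 0)) = stdTet a b n 1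
      rw [show V 1 - V 0 = u from rfl, hBu]
      funext i; fin_cases i <;> simp [stdTet, icast]
    · show icast (B.mulVec (V 2 - V 0)) = stdTet a b n 2
      rw [show V 2 - V 0 = w from rfl, hBw]
      funext i; fin_cases i <;> simp [stdTet, icast]
    · show icast (B.mulVec (V 3 - V 0)) = stdTet a b n 3
      rw [show B.mulVec (V 3 - V 0) = m3 from rfl]
      funext i; fin_cases i <;> simp [stdTet, icast, ha, hb, hn]
  have hinj : Function.Injective (affMap B uoff) :=
    (affHomeo B A uoff hBA hAB).injective
  have hn0 : n ≠ 0 := by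
    intro h0
    have hind : AffineIndependent ℝ (affA B uoff ∘ v) :=
      ((affA B uoff).affineIndependent_iff hinj).2 h.2
    have : (affA B uoff ∘ v) = stdTet a b n := funext fun j => hstd j
    rw [this, h0] at hind
    exact stdTet_dep a b hind
  exact ⟨a, b, n, hn0, tetEquiv_of_forall B uoff (Or.inl hdetB) hstd⟩

lemma stdTet_flip (a b n : ℤ) : TetEquiv (stdTet a b n) (stdTet a b (-n)) := by
  apply tetEquiv_of_forall ![![1,0,0],![0,1,0],![0,0,-1]] 0
  · right
    erw [Matrix.det_fin_three]; simp
  · intro j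
    fin_cases j <;> (funext i; fin_cases i <;> simp [affMap, Fin.sum_univ_three, stdTet])

lemma stdTet_shear (a b n q1 q2 : ℤ) :
    TetEquiv (stdTet a b n) (stdTet (a - q1 * n) (b - q2 * n) n) := by
  apply tetEquiv_of_forall ![![1,0,-q1],![0,1,-q2],![0,0,1]] 0
  · left
    show (Matrix.of ![![1,0,-q1],![0,1,-q2],![0,0,1]]).det = 1
    rw [Matrix.det_fin_three]
    simp only [Matrix.of_apply, Matrix.cons_val_zero, Matrix.cons_val_one, Matrix.head_cons,
      Matrix.cons_val_two, Matrix.tail_cons]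
    ring
  · intro j
    fin_cases j <;> (funext i; fin_cases i <;>
      (simp [affMap, Fin.sum_univ_three, stdTet]; try push_cast; try ring))

end MainRed


open Stmt2Aux in
theorem stmt2 (v : Fin 4 → Fin 3 → ℝ) (h : IsLatticeTet v) :
    CleanTet v ↔
      (TetEquiv v (stdTet 0 0 1) ∨
        ∃ a b n : ℤ, 2 ≤ n ∧ 0 ≤ a ∧ a ≤ n - 1 ∧ 0 ≤ b ∧ b ≤ n - 1 ∧
          Int.gcd a n = 1 ∧ Int.gcd b n = 1 ∧ Int.gcd (1 - a - b) n = 1 ∧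
          TetEquiv v (stdTet a b n)) := by
  constructor
  · intro hc
    obtain ⟨a0, b0, n0, hn0, hEq0⟩ := main_reduction h hc
    obtain ⟨a1, b1, n1, hn1pos, hEq1⟩ : ∃ a b n : ℤ, 0 < n ∧ TetEquiv v (stdTet a b n) := by
      rcases lt_or_gt_of_ne hn0 with hlt | hgt
      · exact ⟨a0, b0, -n0, by omega, tetEquiv_trans hEq0 (stdTet_flip a0 b0 n0)⟩
      · exact ⟨a0, b0, n0, hgt, hEq0⟩
    have hshear := stdTet_shear a1 b1 n1 (a1 / n1) (b1 / n1)
    rw [show a1 - a1 / n1 * n1 = a1 % n1 from by rw [Int.emod_def]; ring,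
      show b1 - b1 / n1 * n1 = b1 % n1 from by rw [Int.emod_def]; ring] at hshear
    have hEq2 : TetEquiv v (stdTet (a1 % n1) (b1 % n1) n1) := tetEquiv_trans hEq1 hshear
    have ha0 : 0 ≤ a1 % n1 := Int.emod_nonneg _ hn1pos.ne'
    have ha1 : a1 % n1 < n1 := Int.emod_lt_of_pos _ hn1pos
    have hb0 : 0 ≤ b1 % n1 := Int.emod_nonneg _ hn1pos.ne'
    have hb1 : b1 % n1 < n1 := Int.emod_lt_of_pos _ hn1pos
    by_cases hone : n1 = 1
    · left
      have hA : a1 % n1 = 0 := by omega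
      have hB : b1 % n1 = 0 := by omega
      rw [hA, hB, hone] at hEq2
      exact hEq2
    · right
      have hn2 : 2 ≤ n1 := by omega
      have hcstd : CleanTet (stdTet (a1 % n1) (b1 % n1) n1) := cleanTet_of_tetEquiv hEq2 hc
      exact ⟨a1 % n1, b1 % n1, n1, hn2, ha0, by omega, hb0, by omega,
        gcd_a_of_clean _ _ hn2 hcstd, gcd_b_of_clean _ _ hn2 hcstd,
        gcd_c_of_clean _ _ hn2 hcstd, hEq2⟩
  · rintro (hEq | ⟨a, b, n, hn2, ha0, ha1, hb0, hb1, hga, hgb, hgc, hEq⟩)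
    · exact cleanTet_of_tetEquiv (tetEquiv_symm hEq)
        (clean_stdTet 0 0 one_pos (by decide) (by decide) (by decide))
    · exact cleanTet_of_tetEquiv (tetEquiv_symm hEq) (clean_stdTet a b (by omega) hga hgb hgc)
end

section
/- Let a, b, n be integers with n ≥ 2, 0 ≤ a, b ≤ n − 1 and gcd(a, n) = gcd(b, n) = gcd(c, n) = 1, where c = 1 − a − b (so T_{a,b,n} is clean). For 1 ≤ t ≤ n − 1 set A_t = {t(n−c)/n} + {t(n−a)/n} + {t(n−b)/n} + {t/n}. Then i(T_{a,b,n}) equals the number of integers t with 1 ≤ t ≤ n − 1 and A_t = 1. -/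
open scoped BigOperators

noncomputable def wgt (a b n : ℤ) (x : Fin 3 → ℝ) : Fin 4 → ℝ :=
  ![1 - x 0 - x 1 + ((a:ℝ) + b - 1) * x 2 / n,
    x 0 - (a:ℝ) * x 2 / n, x 1 - (b:ℝ) * x 2 / n, x 2 / n]

section
variable (a b n : ℤ) (hn : 2 ≤ n)

lemma wgt_sum (hn : 2 ≤ n) (x : Fin 3 → ℝ) : ∑ i, wgt a b n x i = 1 := by
  have hne : (n:ℝ) ≠ 0 := by
    have : (0:ℝ) < n := by exact_mod_cast (by omega : (0:ℤ) < n)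
    positivity
  simp [wgt, Fin.sum_univ_four]
  field_simp
  ring

lemma wgt_comb (hn : 2 ≤ n) (x : Fin 3 → ℝ) : ∑ i, wgt a b n x i • stdTet a b n i = x := by
  have hne : (n:ℝ) ≠ 0 := by
    have : (0:ℝ) < n := by exact_mod_cast (by omega : (0:ℤ) < n)
    positivity
  funext k
  rw [Fin.sum_univ_four]
  fin_cases k <;>
    simp [wgt, stdTet] <;> field_simp <;> ring

lemma stdTet_affineIndependent (hn : 2 ≤ n) : AffineIndependent ℝ (stdTet a b n) := by
  have hne : (n:ℝ) ≠ 0 := by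
    have : (0:ℝ) < n := by exact_mod_cast (by omega : (0:ℤ) < n)
    positivity
  rw [affineIndependent_iff_of_fintype]
  intro w hw hs
  rw [Finset.weightedVSub_eq_linear_combination _ hw] at hs
  have h0 := congrFun hs 0
  have h1 := congrFun hs 1
  have h2 := congrFun hs 2
  simp [stdTet, Fin.sum_univ_four] at h0 h1 h2
  rw [Fin.sum_univ_four] at hw
  have hw3 : w 3 = 0 := by
    rcases h2 with h | h
    · exact h
    · exact absurd h (by omega : n ≠ 0)
  intro i
  fin_cases i <;> simp_all

lemma stdTet_span (hn : 2 ≤ n) : affineSpan ℝ (Set.range (stdTet a b n)) = ⊤ := by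
  rw [(stdTet_affineIndependent a b n hn).affineSpan_eq_top_iff_card_eq_finrank_add_one]
  simp [Module.finrank_pi]

noncomputable def stdBasis (hn : 2 ≤ n) : AffineBasis (Fin 4) ℝ (Fin 3 → ℝ) :=
  ⟨stdTet a b n, stdTet_affineIndependent a b n hn, stdTet_span a b n hn⟩

lemma stdBasis_coord (hn : 2 ≤ n) (x : Fin 3 → ℝ) (i : Fin 4) :
    (stdBasis a b n hn).coord i x = wgt a b n x i := by
  have h1 : ∑ j, wgt a b n x j = 1 := wgt_sum a b n hn x
  have h2 := (stdBasis a b n hn).coord_apply_combination_of_mem (Finset.mem_univ i) h1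
  rwa [Finset.univ.affineCombination_eq_linear_combination _ _ h1,
    (show ⇑(stdBasis a b n hn) = stdTet a b n from rfl), wgt_comb a b n hn x] at h2

lemma interior_tetSet_s3 (hn : 2 ≤ n) :
    interior (tetSet (stdTet a b n)) = {x | ∀ i, 0 < wgt a b n x i} := by
  have h1 : tetSet (stdTet a b n) = convexHull ℝ (Set.range ⇑(stdBasis a b n hn)) := rfl
  rw [h1, (stdBasis a b n hn).interior_convexHull]
  ext x
  exact forall_congr' fun i => by rw [stdBasis_coord a b n hn x i]

end

lemma fract_ne_zero_aux {m n : ℤ} (hn : 0 < n) (h : ¬ n ∣ m) :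
    Int.fract ((m : ℝ) / (n : ℝ)) ≠ 0 := by
  intro h0
  have hne : (n:ℝ) ≠ 0 := by positivity
  have hx : (m:ℝ)/n - ⌊(m:ℝ)/n⌋ = 0 := by rw [Int.self_sub_floor]; exact h0
  have hm : (m:ℝ) = (⌊(m:ℝ)/n⌋ : ℝ) * n := by field_simp at hx; linarith
  exact h ⟨⌊(m:ℝ)/n⌋, by exact_mod_cast hm.trans (mul_comm _ _)⟩

lemma fractA (a b n t : ℤ) (hn : 2 ≤ n) (hga : Int.gcd a n = 1) (hgb : Int.gcd b n = 1)
    (hgc : Int.gcd (1 - a - b) n = 1) (ht1 : 1 ≤ t) (ht2 : t ≤ n - 1) :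
    (Int.fract (((t * (n - (1 - a - b)) : ℤ) : ℝ) / (n : ℝ)) +
        Int.fract (((t * (n - a) : ℤ) : ℝ) / (n : ℝ)) +
        Int.fract (((t * (n - b) : ℤ) : ℝ) / (n : ℝ)) +
        Int.fract ((t : ℝ) / (n : ℝ)) = 1) ↔
      1 < Int.fract (((t * a : ℤ) : ℝ) / (n : ℝ)) + Int.fract (((t * b : ℤ) : ℝ) / (n : ℝ))
          - (t : ℝ) / (n : ℝ) := by
  have hn0 : (0:ℤ) < n := by omega
  have hnR : (0:ℝ) < (n:ℝ) := by exact_mod_cast hn0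
  have hne : (n:ℝ) ≠ 0 := ne_of_gt hnR
  have hndvd : ∀ m : ℤ, Int.gcd m n = 1 → ¬ (n ∣ t * m) := by
    intro m hg hdvd
    have hcop : IsCoprime (n : ℤ) m := by
      rw [Int.isCoprime_iff_gcd_eq_one, Int.gcd_comm]; exact hg
    have h1 : n ∣ t := hcop.dvd_of_dvd_mul_right hdvd
    have := Int.le_of_dvd (by omega) h1
    omega
  have key : ∀ m : ℤ, Int.gcd m n = 1 →
      Int.fract (((t * (n - m) : ℤ) : ℝ) / n) = 1 - Int.fract (((t * m : ℤ):ℝ)/n) := by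
    intro m hg
    have h1 : ((t * (n - m) : ℤ) : ℝ) / n = (t : ℤ) + -(((t * m : ℤ):ℝ)/n) := by
      push_cast; field_simp; ring
    rw [h1, Int.fract_intCast_add, Int.fract_neg (fract_ne_zero_aux hn0 (hndvd m hg))]
  set p : ℝ := ((t * a : ℤ) : ℝ) / n with hp
  set q : ℝ := ((t * b : ℤ) : ℝ) / n with hq
  set r : ℝ := (t : ℝ) / n with hr
  have hr0 : 0 < r := by rw [hr]; positivity
  have hr1 : r < 1 := by
    rw [hr, div_lt_one hnR]; exact_mod_cast by omega
  have hfr : Int.fract ((t:ℝ)/n) = r := by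
    rw [Int.fract_eq_self.mpr ⟨le_of_lt hr0, hr1⟩]
  have hcrp : ((t * (1 - a - b) : ℤ):ℝ)/n = r - p - q := by
    rw [hp, hq, hr]; push_cast; field_simp
  rw [key (1-a-b) hgc, key a hga, key b hgb, hfr, hcrp]
  have hfp : Int.fract p = p - (⌊p⌋:ℝ) := (Int.self_sub_floor p).symm
  have hfq : Int.fract q = q - (⌊q⌋:ℝ) := (Int.self_sub_floor q).symm
  have hfc : Int.fract (r - p - q) = (r - p - q) - (⌊r - p - q⌋:ℝ) := (Int.self_sub_floor _).symm
  have hp0 : 0 ≤ p - (⌊p⌋:ℝ) := by rw [← hfp]; exact Int.fract_nonneg p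
  have hp1 : p - (⌊p⌋:ℝ) < 1 := by rw [← hfp]; exact Int.fract_lt_one p
  have hq0 : 0 ≤ q - (⌊q⌋:ℝ) := by rw [← hfq]; exact Int.fract_nonneg q
  have hq1 : q - (⌊q⌋:ℝ) < 1 := by rw [← hfq]; exact Int.fract_lt_one q
  rw [hfp, hfq, hfc]
  constructor
  · intro h
    have hF : ⌊r - p - q⌋ = -2 - ⌊p⌋ - ⌊q⌋ := by
      have h2 : ((⌊r - p - q⌋ + ⌊p⌋ + ⌊q⌋ : ℤ):ℝ) = -2 := by push_cast; linarith
      have h3 : (⌊r - p - q⌋ + ⌊p⌋ + ⌊q⌋ : ℤ) = -2 := by exact_mod_cast h2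
      omega
    have h4 := (Int.floor_eq_iff.mp hF).2
    push_cast at h4
    linarith
  · intro h
    have hF : ⌊r - p - q⌋ = -2 - ⌊p⌋ - ⌊q⌋ := by
      rw [Int.floor_eq_iff]
      push_cast
      constructor
      · linarith
      · linarith
    rw [hF]; push_cast; ring

noncomputable def tetPt (a b n t : ℤ) : Fin 3 → ℝ :=
  ![((⌊((t * a : ℤ) : ℝ) / (n : ℝ)⌋ : ℤ) : ℝ) + 1,
    ((⌊((t * b : ℤ) : ℝ) / (n : ℝ)⌋ : ℤ) : ℝ) + 1, (t : ℝ)]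

lemma wgt_val0 (a b n : ℤ) (x : Fin 3 → ℝ) :
    wgt a b n x 0 = 1 - x 0 - x 1 + ((a:ℝ) + b - 1) * x 2 / n := rfl
lemma wgt_val1 (a b n : ℤ) (x : Fin 3 → ℝ) :
    wgt a b n x 1 = x 0 - (a:ℝ) * x 2 / n := rfl
lemma wgt_val2 (a b n : ℤ) (x : Fin 3 → ℝ) :
    wgt a b n x 2 = x 1 - (b:ℝ) * x 2 / n := rfl
lemma wgt_val3 (a b n : ℤ) (x : Fin 3 → ℝ) :
    wgt a b n x 3 = x 2 / n := rfl
lemma tetPt_val0 (a b n t : ℤ) :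
    tetPt a b n t 0 = ((⌊((t * a : ℤ) : ℝ) / (n : ℝ)⌋ : ℤ) : ℝ) + 1 := rfl
lemma tetPt_val1 (a b n t : ℤ) :
    tetPt a b n t 1 = ((⌊((t * b : ℤ) : ℝ) / (n : ℝ)⌋ : ℤ) : ℝ) + 1 := rfl
lemma tetPt_val2 (a b n t : ℤ) : tetPt a b n t 2 = (t : ℝ) := rfl

theorem stmt3_aux (a b n : ℤ) (hn : 2 ≤ n)
    (hga : Int.gcd a n = 1) (hgb : Int.gcd b n = 1) (hgc : Int.gcd (1 - a - b) n = 1) :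
    Set.ncard {x : Fin 3 → ℝ | x ∈ interior (tetSet (stdTet a b n)) ∧ IsLatticePoint x} =
      Set.ncard {t : ℤ | 1 ≤ t ∧ t ≤ n - 1 ∧
        Int.fract (((t * (n - (1 - a - b)) : ℤ) : ℝ) / (n : ℝ)) +
          Int.fract (((t * (n - a) : ℤ) : ℝ) / (n : ℝ)) +
          Int.fract (((t * (n - b) : ℤ) : ℝ) / (n : ℝ)) +
          Int.fract ((t : ℝ) / (n : ℝ)) = 1} := by
  have hn0 : (0:ℤ) < n := by omega
  have hnR : (0:ℝ) < (n:ℝ) := by exact_mod_cast hn0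
  have hne : (n:ℝ) ≠ 0 := ne_of_gt hnR
  set T : Set ℤ := {t : ℤ | 1 ≤ t ∧ t ≤ n - 1 ∧
        Int.fract (((t * (n - (1 - a - b)) : ℤ) : ℝ) / (n : ℝ)) +
          Int.fract (((t * (n - a) : ℤ) : ℝ) / (n : ℝ)) +
          Int.fract (((t * (n - b) : ℤ) : ℝ) / (n : ℝ)) +
          Int.fract ((t : ℝ) / (n : ℝ)) = 1} with hT
  have hSet : {x : Fin 3 → ℝ | x ∈ interior (tetSet (stdTet a b n)) ∧ IsLatticePoint x}
      = tetPt a b n '' T := by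
    ext x
    simp only [Set.mem_setOf_eq, Set.mem_image]
    constructor
    · rintro ⟨hx, hlat⟩
      rw [interior_tetSet_s3 a b n hn] at hx
      choose z hz using hlat
      have h0 := hx 0
      have h1 := hx 1
      have h2 := hx 2
      have h3 := hx 3
      simp only [wgt, Matrix.cons_val_zero, Matrix.cons_val_one, Matrix.head_cons,
        Matrix.cons_val_two, Matrix.tail_cons, Matrix.cons_val_three] at h0 h1 h2 h3
      rw [hz 0] at h0 h1
      rw [hz 1] at h0 h2
      rw [hz 2] at h0 h1 h2 h3
      -- integer inequalities
      have ht0 : 0 < z 2 := by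
        have hm := mul_pos h3 hnR
        rw [div_mul_cancel₀ _ hne] at hm
        exact_mod_cast hm
      have hI1 : a * z 2 < z 0 * n := by
        have h1' : ((a:ℝ) * (z 2 : ℝ)) / (n:ℝ) < (z 0 : ℝ) := by
          have : (a:ℝ) * (z 2:ℝ) / n = (a:ℝ) * (z 2:ℝ) / n := rfl
          linarith [h1]
        have := (div_lt_iff₀ hnR).mp h1'
        exact_mod_cast this
      have hI2 : b * z 2 < z 1 * n := by
        have h2' : ((b:ℝ) * (z 2 : ℝ)) / (n:ℝ) < (z 1 : ℝ) := by linarith [h2]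
        have := (div_lt_iff₀ hnR).mp h2'
        exact_mod_cast this
      have hI0 : (z 0 + z 1 - 1) * n < (a + b - 1) * z 2 := by
        have h0' : (z 0 : ℝ) + (z 1 : ℝ) - 1 < ((a:ℝ) + b - 1) * (z 2:ℝ) / n := by
          linarith [h0]
        have := (lt_div_iff₀ hnR).mp h0'
        exact_mod_cast this
      have e1 : a * z 2 + 1 ≤ z 0 * n := Int.lt_iff_add_one_le.mp hI1
      have e2 : b * z 2 + 1 ≤ z 1 * n := Int.lt_iff_add_one_le.mp hI2
      have e0 : (z 0 + z 1 - 1) * n + 1 ≤ (a + b - 1) * z 2 := Int.lt_iff_add_one_le.mp hI0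
      have ht1 : z 2 ≤ n - 1 := by nlinarith [e0, e1, e2]
      have hz0n : z 0 * n ≤ a * z 2 + n := by nlinarith [e0, e2]
      have hz1n : z 1 * n ≤ b * z 2 + n := by nlinarith [e0, e1]
      -- floors
      have hfa : ⌊((z 2 * a : ℤ) : ℝ) / (n:ℝ)⌋ = z 0 - 1 := by
        rw [Int.floor_eq_iff]
        constructor
        · rw [le_div_iff₀ hnR]
          exact_mod_cast (by linarith [hz0n] : (z 0 - 1) * n ≤ z 2 * a)
        · rw [div_lt_iff₀ hnR]
          exact_mod_cast (by linarith [hI1] : z 2 * a < (z 0 - 1 + 1) * n)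
      have hfb : ⌊((z 2 * b : ℤ) : ℝ) / (n:ℝ)⌋ = z 1 - 1 := by
        rw [Int.floor_eq_iff]
        constructor
        · rw [le_div_iff₀ hnR]
          exact_mod_cast (by linarith [hz1n] : (z 1 - 1) * n ≤ z 2 * b)
        · rw [div_lt_iff₀ hnR]
          exact_mod_cast (by linarith [hI2] : z 2 * b < (z 1 - 1 + 1) * n)
      refine ⟨z 2, ?_, ?_⟩
      · -- membership in T
        refine ⟨ht0, ht1, ?_⟩
        rw [fractA a b n (z 2) hn hga hgb hgc ht0 ht1]
        have hfp : Int.fract (((z 2 * a : ℤ) : ℝ) / (n:ℝ))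
            = ((z 2 * a : ℤ) : ℝ) / n - ((z 0 : ℝ) - 1) := by
          rw [← Int.self_sub_floor, hfa]; push_cast; ring
        have hfq : Int.fract (((z 2 * b : ℤ) : ℝ) / (n:ℝ))
            = ((z 2 * b : ℤ) : ℝ) / n - ((z 1 : ℝ) - 1) := by
          rw [← Int.self_sub_floor, hfb]; push_cast; ring
        rw [hfp, hfq]
        have hid : ((a:ℝ) + b - 1) * (z 2:ℝ) / n
            = ((z 2 * a : ℤ) : ℝ)/n + ((z 2 * b : ℤ):ℝ)/n - (z 2:ℝ)/n := by
          push_cast; field_simp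
        rw [hid] at h0
        linarith [h0]
      · -- x = tetPt
        funext i
        fin_cases i
        · show tetPt a b n (z 2) 0 = x 0
          rw [tetPt_val0, hz 0, hfa]; push_cast; ring
        · show tetPt a b n (z 2) 1 = x 1
          rw [tetPt_val1, hz 1, hfb]; push_cast; ring
        · show tetPt a b n (z 2) 2 = x 2
          rw [tetPt_val2, hz 2]
    · rintro ⟨t, ⟨ht0, ht1, hA⟩, rfl⟩
      rw [fractA a b n t hn hga hgb hgc ht0 ht1] at hA
      set p : ℝ := ((t * a : ℤ) : ℝ) / n with hp
      set q : ℝ := ((t * b : ℤ) : ℝ) / n with hq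
      constructor
      · rw [interior_tetSet_s3 a b n hn]
        intro i
        have hfp : Int.fract p = p - (⌊p⌋ : ℝ) := (Int.self_sub_floor p).symm
        have hfq : Int.fract q = q - (⌊q⌋ : ℝ) := (Int.self_sub_floor q).symm
        have hp1 : p - (⌊p⌋:ℝ) < 1 := by rw [← hfp]; exact Int.fract_lt_one p
        have hq1 : q - (⌊q⌋:ℝ) < 1 := by rw [← hfq]; exact Int.fract_lt_one q
        have hpa : (a:ℝ) * (t:ℝ) / n = p := by rw [hp]; push_cast; ring
        have hqb : (b:ℝ) * (t:ℝ) / n = q := by rw [hq]; push_cast; ring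
        have hid : ((a:ℝ) + b - 1) * (t:ℝ) / n = p + q - (t:ℝ)/n := by
          rw [hp, hq]; push_cast; field_simp
        rw [hfp, hfq] at hA
        have htR : (0:ℝ) < (t:ℝ) := by exact_mod_cast ht0
        fin_cases i
        · show 0 < wgt a b n (tetPt a b n t) 0
          rw [wgt_val0, tetPt_val0, tetPt_val1, tetPt_val2, hid, ← hp, ← hq]
          linarith
        · show 0 < wgt a b n (tetPt a b n t) 1
          rw [wgt_val1, tetPt_val0, tetPt_val2, hpa, ← hp]
          linarith
        · show 0 < wgt a b n (tetPt a b n t) 2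
          rw [wgt_val2, tetPt_val1, tetPt_val2, hqb, ← hq]
          linarith
        · show 0 < wgt a b n (tetPt a b n t) 3
          rw [wgt_val3, tetPt_val2]
          positivity
      · intro i
        fin_cases i
        · refine ⟨⌊p⌋ + 1, ?_⟩
          show tetPt a b n t 0 = _
          rw [tetPt_val0, ← hp]; push_cast; ring
        · refine ⟨⌊q⌋ + 1, ?_⟩
          show tetPt a b n t 1 = _
          rw [tetPt_val1, ← hq]; push_cast; ring
        · refine ⟨t, ?_⟩
          show tetPt a b n t 2 = _
          rw [tetPt_val2]
  rw [hSet, Set.ncard_image_of_injOn]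
  intro s hs s' hs' hss
  have h := congrFun hss 2
  rw [tetPt_val2, tetPt_val2] at h
  exact_mod_cast h

theorem stmt3 (a b n : ℤ) (hn : 2 ≤ n) (ha0 : 0 ≤ a) (ha1 : a ≤ n - 1)
    (hb0 : 0 ≤ b) (hb1 : b ≤ n - 1)
    (hga : Int.gcd a n = 1) (hgb : Int.gcd b n = 1) (hgc : Int.gcd (1 - a - b) n = 1) :
    interiorLatticeCount (stdTet a b n) =
      Set.ncard {t : ℤ | 1 ≤ t ∧ t ≤ n - 1 ∧
        Int.fract (((t * (n - (1 - a - b)) : ℤ) : ℝ) / (n : ℝ)) +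
          Int.fract (((t * (n - a) : ℤ) : ℝ) / (n : ℝ)) +
          Int.fract (((t * (n - b) : ℤ) : ℝ) / (n : ℝ)) +
          Int.fract ((t : ℝ) / (n : ℝ)) = 1} := by
  exact stmt3_aux a b n hn hga hgb hgc
end

section
/- If T is a clean lattice tetrahedron and w is a point of ℤ³ in the interior of T, then BC_T(w) = (d₁/N, d₂/N, d₃/N, d₄/N) for some positive integers d₁, d₂, d₃, d₄ with d₁ + d₂ + d₃ + d₄ = N and gcd(dⱼ, N) = 1 for each j. -/
open scoped BigOperators

lemma boundary_contra (v : Fin 4 → Fin 3 → ℝ) (hAI : AffineIndependent ℝ v)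
    (hclean : CleanTet v) (μ : Fin 4 → ℝ) (hμ0 : ∀ j, 0 ≤ μ j) (hμ1 : ∀ j, μ j < 1)
    (hs : ∑ j, μ j = 1) (j0 : Fin 4) (hz : μ j0 = 0)
    (hlat : IsLatticePoint (∑ j, μ j • v j)) : False := by
  have hspan : affineSpan ℝ (Set.range v) = ⊤ := by
    rw [hAI.affineSpan_eq_top_iff_card_eq_finrank_add_one]
    simp
  let b : AffineBasis (Fin 4) ℝ (Fin 3 → ℝ) := ⟨v, hAI, hspan⟩
  have hbv : ⇑b = v := rfl
  set x := ∑ j, μ j • v j with hxdef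
  have hxc : x = Finset.univ.affineCombination ℝ v μ :=
    (Finset.affineCombination_eq_linear_combination _ _ _ hs).symm
  have hcoord : ∀ i, b.coord i x = μ i := by
    intro i; rw [hxc]
    exact b.coord_apply_combination_of_mem (Finset.mem_univ i) hs
  have hmem : x ∈ tetSet v := by
    rw [hxc, tetSet]
    exact affineCombination_mem_convexHull (fun i _ => hμ0 i) hs
  have hnint : x ∉ interior (tetSet v) := by
    rw [tetSet, ← hbv, b.interior_convexHull]
    intro hx
    have := hx j0
    rw [hcoord j0, hz] at this
    exact lt_irrefl _ this
  have hclosed : IsClosed (tetSet v) := (Set.finite_range v).isClosed_convexHull (𝕜 := ℝ)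
  have hfr : x ∈ frontier (tetSet v) := by
    rw [hclosed.frontier_eq]; exact ⟨hmem, hnint⟩
  obtain ⟨i, hi⟩ := hclean x hfr hlat
  have h1 : b.coord i x = 1 := by rw [← hi, ← hbv, b.coord_apply_eq]
  rw [hcoord i] at h1
  exact absurd h1 (ne_of_lt (hμ1 i))

lemma exists_int_rep (v : Fin 4 → Fin 3 → ℝ) (hlp : ∀ j, ∀ i, ∃ z : ℤ, v j i = (z:ℝ))
    (hAI : AffineIndependent ℝ v)
    (w : Fin 3 → ℝ) (hwl : ∀ i, ∃ z : ℤ, w i = (z:ℝ))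
    (lam : Fin 4 → ℝ) (hsum : (∑ j, lam j) = 1) (hcomb : w = ∑ j, lam j • v j) :
    ∃ E : Fin 4 → ℤ, ∃ D : ℤ, D ≠ 0 ∧ (∑ j, E j) = D ∧ ∀ j, (E j : ℝ) = (D:ℝ) * lam j := by
  classical
  choose vz hvz using hlp
  choose wz hwz using hwl
  have hwi : ∀ i, w i = ∑ j, lam j * v j i := by
    intro i
    have := congrFun hcomb i
    simpa [Finset.sum_apply, Pi.smul_apply, smul_eq_mul] using this
  set M : Matrix (Fin 3) (Fin 3) ℤ := Matrix.of (fun i k => vz k.succ i - vz 0 i) with hM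
  set Mr : Matrix (Fin 3) (Fin 3) ℝ := M.map (Int.cast) with hMr
  have hmulvec : Mr.mulVec (fun k => lam k.succ) = fun i => w i - v 0 i := by
    funext i
    have e1 : ∑ j, lam j * (v j i - v 0 i) = w i - v 0 i := by
      have e2 : ∑ j, lam j * (v j i - v 0 i)
          = (∑ j, lam j * v j i) - (∑ j, lam j) * v 0 i := by
        rw [Finset.sum_mul, ← Finset.sum_sub_distrib]
        exact Finset.sum_congr rfl (fun j _ => by ring)
      rw [e2, hsum, hwi i, one_mul]
    simp only [Matrix.mulVec, dotProduct, hMr, hM, Matrix.map_apply, Matrix.of_apply]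
    push_cast
    simp only [← hvz]
    rw [← e1, Fin.sum_univ_succ (f := fun j => lam j * (v j i - v 0 i)), sub_self, mul_zero,
      zero_add]
    exact Finset.sum_congr rfl (fun k _ => mul_comm _ _)
  have hli : LinearIndependent ℝ (fun k : Fin 3 => Mr.transpose k) := by
    have h2 := (affineIndependent_iff_linearIndependent_vsub ℝ v 0).mp hAI
    have hf : Function.Injective (fun k : Fin 3 => (⟨k.succ, Fin.succ_ne_zero k⟩ : {x : Fin 4 // x ≠ 0})) := by
      intro a b hab
      simpa using Fin.succ_injective 3 (congrArg Subtype.val hab)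
    have h3 := h2.comp _ hf
    have he : (fun k : Fin 3 => Mr.transpose k)
        = fun k : Fin 3 => v (⟨k.succ, Fin.succ_ne_zero k⟩ : {x : Fin 4 // x ≠ 0}) -ᵥ v 0 := by
      funext k
      funext i
      simp only [Matrix.transpose_apply, hMr, hM, Matrix.map_apply, Matrix.of_apply,
        vsub_eq_sub, Pi.sub_apply]
      push_cast
      rw [hvz, hvz]
    rw [he]
    exact h3
  have hu : IsUnit Mr := Matrix.linearIndependent_cols_iff_isUnit.mp hli
  have hdetr : Mr.det ≠ 0 := (Matrix.isUnit_iff_isUnit_det Mr |>.mp hu).ne_zero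
  have hdetcast : (M.det : ℝ) = Mr.det := by
    have := RingHom.map_det (Int.castRingHom ℝ) M
    exact this
  have hD : M.det ≠ 0 := by
    intro h0
    rw [h0] at hdetcast
    exact hdetr (by exact_mod_cast hdetcast.symm)
  have hadj : (Matrix.adjugate Mr).mulVec (Mr.mulVec (fun k => lam k.succ))
      = Mr.det • (fun k => lam k.succ) := by
    rw [Matrix.mulVec_mulVec, Matrix.adjugate_mul, Matrix.smul_mulVec, Matrix.one_mulVec]
  set ez : Fin 3 → ℤ := (Matrix.adjugate M).mulVec (fun i => wz i - vz 0 i) with hezdef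
  have hadjm : Matrix.adjugate Mr = (Matrix.adjugate M).map (Int.cast) := by
    have := RingHom.map_adjugate (Int.castRingHom ℝ) M
    simp only [RingHom.mapMatrix_apply] at this
    rw [hMr]
    exact this.symm ▸ rfl
  have hez : ∀ k, (ez k : ℝ) = (M.det : ℝ) * lam k.succ := by
    intro k
    have h4 := congrFun hadj k
    rw [hmulvec, hadjm] at h4
    simp only [Matrix.mulVec, dotProduct, Matrix.map_apply, Pi.smul_apply,
      smul_eq_mul] at h4 ⊢
    rw [hdetcast, ← h4, hezdef]
    simp only [Matrix.mulVec, dotProduct]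
    push_cast
    exact Finset.sum_congr rfl (fun j _ => by rw [hwz, hvz])
  refine ⟨Matrix.vecCons (M.det - ∑ k, ez k) ez, M.det, hD, ?_, ?_⟩
  · rw [Fin.sum_univ_succ]
    simp only [Matrix.cons_val_zero, Matrix.cons_val_succ]
    ring
  · intro j
    refine Fin.cases ?_ ?_ j
    · simp only [Matrix.cons_val_zero]
      have hl0 : lam 0 = 1 - ∑ k : Fin 3, lam k.succ := by
        rw [← hsum, Fin.sum_univ_succ]; ring
      push_cast
      rw [hl0]
      rw [Finset.sum_congr rfl (fun k _ => hez k), ← Finset.mul_sum]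
      have hdc : (M.map fun x : ℤ => (x:ℝ)).det = (M.det:ℝ) := hdetcast.symm
      rw [hdc]
      ring
    · intro k
      simp only [Matrix.cons_val_succ]
      exact hez k

theorem stmt4 (v : Fin 4 → Fin 3 → ℝ) (h : IsLatticeTet v) (hclean : CleanTet v)
    (w : Fin 3 → ℝ) (hw : w ∈ interior (tetSet v)) (hwl : IsLatticePoint w)
    (lam : Fin 4 → ℝ) (hsum : (∑ j, lam j) = 1) (hcomb : w = ∑ j, lam j • v j) :
    ∃ (N : ℤ) (dd : Fin 4 → ℤ), 0 < N ∧ (∀ j, 0 < dd j) ∧ (∑ j, dd j) = N ∧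
      (∀ j, Int.gcd (dd j) N = 1) ∧ (∀ j, lam j = (dd j : ℝ) / (N : ℝ)) := by
  classical
  obtain ⟨hlp, hAI⟩ := h
  -- positivity of barycentric coordinates
  have hspan : affineSpan ℝ (Set.range v) = ⊤ := by
    rw [hAI.affineSpan_eq_top_iff_card_eq_finrank_add_one]
    simp
  let b : AffineBasis (Fin 4) ℝ (Fin 3 → ℝ) := ⟨v, hAI, hspan⟩
  have hbv : ⇑b = v := rfl
  have hcoordw : ∀ i, b.coord i w = lam i := by
    intro i
    rw [hcomb, ← Finset.affineCombination_eq_linear_combination Finset.univ v lam hsum]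
    exact b.coord_apply_combination_of_mem (Finset.mem_univ i) hsum
  have hlampos : ∀ i, 0 < lam i := by
    intro i
    have hw' := hw
    rw [tetSet, ← hbv, b.interior_convexHull] at hw'
    have := hw' i
    rwa [hcoordw i] at this
  -- integer representation
  have hwi : ∀ i, w i = ∑ j, lam j * v j i := by
    intro i
    have := congrFun hcomb i
    simpa [Finset.sum_apply, Pi.smul_apply, smul_eq_mul] using this
  obtain ⟨E₀, D₀, hD0, hEsum0, hE0⟩ := exists_int_rep v (fun j i => hlp j i) hAI w hwl lam hsum hcomb
  have key : ∀ (E : Fin 4 → ℤ) (D : ℤ), 0 < D → (∑ j, E j) = D →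
      (∀ j, (E j : ℝ) = (D:ℝ) * lam j) →
      ∃ (N : ℤ) (dd : Fin 4 → ℤ), 0 < N ∧ (∀ j, 0 < dd j) ∧ (∑ j, dd j) = N ∧
        (∀ j, Int.gcd (dd j) N = 1) ∧ (∀ j, lam j = (dd j : ℝ) / (N : ℝ)) := by
    intro E D hDpos hEsum hE
    have hEpos : ∀ j, 0 < E j := by
      intro j
      have : (0:ℝ) < (E j : ℝ) := by
        rw [hE j]
        exact mul_pos (by exact_mod_cast hDpos) (hlampos j)
      exact_mod_cast this
    set g : ℕ := (E 0).gcd ((E 1).gcd ((E 2).gcd (E 3))) with hgdef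
    have hgdvd : ∀ j, (g:ℤ) ∣ E j := by
      intro j
      fin_cases j
      · exact Int.gcd_dvd_left _ _
      · exact dvd_trans (Int.gcd_dvd_right _ _) (Int.gcd_dvd_left _ _)
      · exact dvd_trans (Int.gcd_dvd_right _ _) (dvd_trans (Int.gcd_dvd_right _ _) (Int.gcd_dvd_left _ _))
      · exact dvd_trans (Int.gcd_dvd_right _ _) (dvd_trans (Int.gcd_dvd_right _ _) (Int.gcd_dvd_right _ _))
    have hgD : (g:ℤ) ∣ D := by
      rw [← hEsum]
      exact Finset.dvd_sum (fun j _ => hgdvd j)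
    have hgpos : (0:ℤ) < g := by
      rcases Nat.eq_zero_or_pos g with h0 | h1
      · exfalso
        have := hgdvd 0
        rw [h0] at this
        simp only [Nat.cast_zero, zero_dvd_iff] at this
        exact absurd this (ne_of_gt (hEpos 0))
      · exact_mod_cast h1
    have hgmax : ∀ c:ℤ, (∀ j, c ∣ E j) → c ∣ (g:ℤ) := by
      intro c hc
      exact Int.dvd_coe_gcd (hc 0) (Int.dvd_coe_gcd (hc 1) (Int.dvd_coe_gcd (hc 2) (hc 3)))
    set dd : Fin 4 → ℤ := fun j => E j / g with hdddef
    set N : ℤ := D / g with hNdef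
    have hEdd : ∀ j, E j = dd j * g := fun j => (Int.ediv_mul_cancel (hgdvd j)).symm
    have hDN : D = N * g := (Int.ediv_mul_cancel hgD).symm
    have hNpos : 0 < N := by
      by_contra hn
      push_neg at hn
      have : N * g ≤ 0 := mul_nonpos_of_nonpos_of_nonneg hn (le_of_lt hgpos)
      rw [← hDN] at this
      exact absurd hDpos (not_lt.mpr this)
    have hddpos : ∀ j, 0 < dd j := by
      intro j
      by_contra hn
      push_neg at hn
      have : dd j * g ≤ 0 := mul_nonpos_of_nonpos_of_nonneg hn (le_of_lt hgpos)
      rw [← hEdd j] at this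
      exact absurd (hEpos j) (not_lt.mpr this)
    have hgne : (g:ℤ) ≠ 0 := ne_of_gt hgpos
    have hsumdd : (∑ j, dd j) = N := by
      apply mul_right_cancel₀ hgne
      rw [Finset.sum_mul, ← hDN, ← hEsum]
      exact Finset.sum_congr rfl (fun j _ => (hEdd j).symm)
    have hgR : ((g:ℤ):ℝ) ≠ 0 := by exact_mod_cast hgne
    have hNR : ((N:ℤ):ℝ) ≠ 0 := by exact_mod_cast ne_of_gt hNpos
    have hddR : ∀ j, (dd j : ℝ) = (N:ℝ) * lam j := by
      intro j
      have h6 := hE j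
      rw [hEdd j, hDN] at h6
      push_cast at h6
      apply mul_right_cancel₀ hgR
      linear_combination h6
    have hlamdd : ∀ j, lam j = (dd j : ℝ) / (N : ℝ) := by
      intro j
      rw [eq_div_iff hNR]
      linarith [hddR j]
    have hddmax : ∀ c:ℤ, 0 < c → (∀ j, c ∣ dd j) → c ≤ 1 := by
      intro c hc hcd
      have h7 : (c * g) ∣ (g:ℤ) := by
        apply hgmax
        intro j
        rw [hEdd j]
        exact mul_dvd_mul (hcd j) dvd_rfl
      have h8 : c * g ≤ g := Int.le_of_dvd hgpos h7
      have h9 : c * g ≤ 1 * g := by rwa [one_mul]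
      exact le_of_mul_le_mul_right h9 hgpos
    refine ⟨N, dd, hNpos, hddpos, hsumdd, ?_, hlamdd⟩
    -- the coprimality via cleanness
    intro j0
    by_contra hne
    obtain ⟨p, hp, hpdvd⟩ := Nat.exists_prime_and_dvd hne
    have hpdd : (p:ℤ) ∣ dd j0 :=
      dvd_trans (Int.natCast_dvd_natCast.mpr hpdvd) (Int.gcd_dvd_left _ _)
    have hpN : (p:ℤ) ∣ N :=
      dvd_trans (Int.natCast_dvd_natCast.mpr hpdvd) (Int.gcd_dvd_right _ _)
    have hp2 : (2:ℤ) ≤ p := by exact_mod_cast hp.two_le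
    have hpz : (0:ℤ) < p := by linarith
    have hpne : (p:ℤ) ≠ 0 := ne_of_gt hpz
    set K : ℤ := N / p with hKdef
    have hK : (p:ℤ) * K = N := Int.mul_ediv_cancel' hpN
    -- the common final step
    have final : ∀ s : ℤ, s = 1 ∨ s = -1 → (∑ j, (s * dd j) % p) = p → False := by
      intro s hs hsump
      set c : Fin 4 → ℤ := fun j => (s * dd j) % p with hcdef
      set q : Fin 4 → ℤ := fun j => (s * dd j) / p with hqdef
      have hcd : ∀ j, c j = s * dd j - p * q j := fun j => Int.emod_def _ _
      have hc0 : ∀ j, 0 ≤ c j := fun j => Int.emod_nonneg _ hpne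
      have hclt : ∀ j, c j < p := fun j => Int.emod_lt_of_pos _ hpz
      have hcj0 : c j0 = 0 := Int.emod_eq_zero_of_dvd (Dvd.dvd.mul_left hpdd s)
      set μ : Fin 4 → ℝ := fun j => (c j : ℝ) / p with hμdef
      have hpR : (0:ℝ) < (p:ℝ) := by exact_mod_cast hpz
      have hμ0 : ∀ j, 0 ≤ μ j := by
        intro j
        exact div_nonneg (by exact_mod_cast hc0 j) (le_of_lt hpR)
      have hμ1 : ∀ j, μ j < 1 := by
        intro j
        simp only [hμdef]
        rw [div_lt_one hpR]
        exact_mod_cast hclt j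
      have hμs : ∑ j, μ j = 1 := by
        simp only [hμdef]
        rw [← Finset.sum_div]
        rw [div_eq_one_iff_eq (ne_of_gt hpR)]
        exact_mod_cast congrArg (Int.cast : ℤ → ℝ) hsump
      have hμj0 : μ j0 = 0 := by
        simp only [hμdef]
        simp [hcj0]
      have hμformula : ∀ j, μ j = (s:ℝ) * (K:ℝ) * lam j - (q j : ℝ) := by
        intro j
        simp only [hμdef]
        rw [hcd j]
        have hNpK : ((N:ℤ):ℝ) = (p:ℝ) * (K:ℝ) := by exact_mod_cast hK.symm
        push_cast
        rw [hddR j, hNpK]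
        field_simp
      have hlatx : IsLatticePoint (∑ j, μ j • v j) := by
        intro i
        choose vz hvz using fun j i => hlp j i
        choose wz hwz using hwl
        refine ⟨s * K * wz i - ∑ j, q j * vz j i, ?_⟩
        simp only [Finset.sum_apply, Pi.smul_apply, smul_eq_mul]
        rw [Finset.sum_congr rfl (fun j _ => by rw [hμformula j])]
        have hterm : ∀ j : Fin 4, ((s:ℝ) * (K:ℝ) * lam j - (q j:ℝ)) * v j i
            = (s:ℝ) * (K:ℝ) * (lam j * v j i) - (q j:ℝ) * v j i := fun j => by ring
        rw [Finset.sum_congr rfl (fun j _ => hterm j), Finset.sum_sub_distrib,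
          ← Finset.mul_sum, ← hwi i, hwz i]
        push_cast
        rw [Finset.sum_congr rfl (fun j _ => by rw [hvz j i])]
      exact boundary_contra v hAI hclean μ hμ0 hμ1 hμs j0 hμj0 hlatx
    -- show one of the two sums equals p
    set r : Fin 4 → ℤ := fun j => dd j % p with hrdef
    set r' : Fin 4 → ℤ := fun j => (-dd j) % p with hr'def
    have hr0 : ∀ j, 0 ≤ r j := fun j => Int.emod_nonneg _ hpne
    have hr'0 : ∀ j, 0 ≤ r' j := fun j => Int.emod_nonneg _ hpne
    have hrj0 : r j0 = 0 := Int.emod_eq_zero_of_dvd hpdd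
    have hr'j0 : r' j0 = 0 := Int.emod_eq_zero_of_dvd (dvd_neg.mpr hpdd)
    have hpsumr : (p:ℤ) ∣ ∑ j, r j := by
      have h12 : ∑ j, r j = N - ∑ j, p * (dd j / p) := by
        simp only [hrdef]
        rw [Finset.sum_congr rfl (fun j (_ : j ∈ Finset.univ) => Int.emod_def (dd j) p),
          Finset.sum_sub_distrib, hsumdd]
      rw [h12]
      exact dvd_sub hpN (Finset.dvd_sum (fun j _ => dvd_mul_right _ _))
    have hpsumr' : (p:ℤ) ∣ ∑ j, r' j := by
      have h13 : ∑ j, (-dd j) = -N := by rw [Finset.sum_neg_distrib, hsumdd]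
      have h12 : ∑ j, r' j = (-N) - ∑ j, p * ((-dd j) / p) := by
        simp only [hr'def]
        rw [Finset.sum_congr rfl (fun j (_ : j ∈ Finset.univ) => Int.emod_def (-dd j) p),
          Finset.sum_sub_distrib, h13]
      rw [h12]
      exact dvd_sub (dvd_neg.mpr hpN) (Finset.dvd_sum (fun j _ => dvd_mul_right _ _))
    obtain ⟨j1, hj1⟩ : ∃ j1, ¬ (p:ℤ) ∣ dd j1 := by
      by_contra hall
      push_neg at hall
      have := hddmax p hpz hall
      linarith
    have hrj1 : 0 < r j1 := by
      rcases lt_or_eq_of_le (hr0 j1) with h | h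
      · exact h
      · exfalso
        have h' : dd j1 % p = 0 := by simp only [hrdef] at h; omega
        exact hj1 (Int.dvd_of_emod_eq_zero h')
    have hr'j1 : 0 < r' j1 := by
      rcases lt_or_eq_of_le (hr'0 j1) with h | h
      · exact h
      · exfalso
        have h' : (-dd j1) % p = 0 := by simp only [hr'def] at h; omega
        have := Int.dvd_of_emod_eq_zero h'
        rw [dvd_neg] at this
        exact hj1 this
    have hrsumpos : 0 < ∑ j, r j :=
      Finset.sum_pos' (fun j _ => hr0 j) ⟨j1, Finset.mem_univ j1, hrj1⟩
    have hr'sumpos : 0 < ∑ j, r' j :=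
      Finset.sum_pos' (fun j _ => hr'0 j) ⟨j1, Finset.mem_univ j1, hr'j1⟩
    have htermle : ∀ j : Fin 4, r j + r' j ≤ p := by
      intro j
      have hdvdterm : (p:ℤ) ∣ r j + r' j := by
        have : r j + r' j = -(p * (dd j / p) + p * ((-dd j) / p)) := by
          simp only [hrdef, hr'def]
          rw [Int.emod_def, Int.emod_def]
          ring
        rw [this]
        exact dvd_neg.mpr (dvd_add (dvd_mul_right _ _) (dvd_mul_right _ _))
      obtain ⟨t, ht⟩ := hdvdterm
      have h2p : r j + r' j < 2 * p := by
        have h14 := Int.emod_lt_of_pos (dd j) hpz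
        have h15 := Int.emod_lt_of_pos (-dd j) hpz
        simp only [hrdef, hr'def]
        linarith
      have hnn : 0 ≤ r j + r' j := add_nonneg (hr0 j) (hr'0 j)
      rw [ht] at h2p hnn ⊢
      have h2p' : p * t < p * 2 := by linarith
      have ht2 : t < 2 := lt_of_mul_lt_mul_left h2p' (le_of_lt hpz)
      have ht0 : 0 ≤ t := by
        by_contra hc
        push_neg at hc
        have : p * t ≤ p * (-1) := mul_le_mul_of_nonneg_left (by omega) (le_of_lt hpz)
        linarith
      have : p * t ≤ p * 1 := mul_le_mul_of_nonneg_left (by omega) (le_of_lt hpz)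
      linarith
    have hsum3 : (∑ j, r j) + (∑ j, r' j) ≤ 3 * p := by
      rw [← Finset.sum_add_distrib]
      have h11 : ∑ j, (r j + r' j) = ∑ j ∈ Finset.univ.erase j0, (r j + r' j) :=
        (Finset.sum_erase _ (by rw [hrj0, hr'j0, add_zero])).symm
      rw [h11]
      calc ∑ j ∈ Finset.univ.erase j0, (r j + r' j)
          ≤ (Finset.univ.erase j0).card • (p:ℤ) :=
            Finset.sum_le_card_nsmul (Finset.univ.erase j0) (fun j => r j + r' j) (p:ℤ)
              (fun j _ => htermle j)
        _ = 3 * p := by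
            rw [Finset.card_erase_of_mem (Finset.mem_univ j0)]
            simp [nsmul_eq_mul]
    obtain ⟨m, hm⟩ := hpsumr
    obtain ⟨m', hm'⟩ := hpsumr'
    rw [hm] at hrsumpos
    rw [hm'] at hr'sumpos
    rw [hm, hm'] at hsum3
    have hm1 : 1 ≤ m := by
      by_contra hc
      push_neg at hc
      have : p * m ≤ p * 0 := mul_le_mul_of_nonneg_left (by omega) (le_of_lt hpz)
      linarith
    have hm'1 : 1 ≤ m' := by
      by_contra hc
      push_neg at hc
      have : p * m' ≤ p * 0 := mul_le_mul_of_nonneg_left (by omega) (le_of_lt hpz)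
      linarith
    have hmm' : m + m' ≤ 3 := by
      by_contra hc
      push_neg at hc
      have h16 : p * 4 ≤ p * (m + m') := mul_le_mul_of_nonneg_left (by omega) (le_of_lt hpz)
      have h17 : p * (m + m') = p * m + p * m' := mul_add _ _ _
      linarith
    have hcase : m = 1 ∨ m' = 1 := by omega
    rcases hcase with hc1 | hc1
    · apply final 1 (Or.inl rfl)
      have : (∑ j, (1 * dd j) % p) = ∑ j, r j := by
        exact Finset.sum_congr rfl (fun j _ => by rw [one_mul])
      rw [this, hm, hc1, mul_one]
    · apply final (-1) (Or.inr rfl)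
      have : (∑ j, ((-1) * dd j) % p) = ∑ j, r' j := by
        refine Finset.sum_congr rfl (fun j _ => by rw [neg_one_mul])
      rw [this, hm', hc1, mul_one]
  rcases lt_or_gt_of_ne hD0 with hneg | hpos
  · apply key (fun j => -E₀ j) (-D₀) (by linarith)
    · rw [Finset.sum_neg_distrib, hEsum0]
    · intro j
      push_cast
      rw [hE0 j]
      ring
  · exact key E₀ D₀ hpos hEsum0 hE0
end

section
/- Given positive integers d₁, d₂, d₃, d₄ with d₁ + d₂ + d₃ + d₄ = N and gcd(dⱼ, N) = 1 for each j, there exists a clean lattice tetrahedron T and a point w of ℤ³ in the interior of T with BC_T(w) = (d₁/N, d₂/N, d₃/N, d₄/N). -/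
open scoped BigOperators

private lemma stmt5_aux_dvd {N z : ℤ} (hN : 0 < N) (hdvd : N ∣ z) (h0 : 0 ≤ z) (h1 : z ≤ N) :
    z = 0 ∨ z = N := by
  obtain ⟨c, rfl⟩ := hdvd
  have hc0 : 0 ≤ c := le_of_mul_le_mul_left (by simpa using h0) hN
  have hc1 : c ≤ 1 := le_of_mul_le_mul_left (by simpa using h1) hN
  interval_cases c <;> simp

theorem stmt5 (N : ℤ) (dd : Fin 4 → ℤ) (hpos : ∀ j, 0 < dd j) (hsum : (∑ j, dd j) = N)
    (hgcd : ∀ j, Int.gcd (dd j) N = 1) :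
    ∃ v : Fin 4 → Fin 3 → ℝ, IsLatticeTet v ∧ CleanTet v ∧
      ∃ w : Fin 3 → ℝ, w ∈ interior (tetSet v) ∧ IsLatticePoint w ∧
        w = ∑ j, ((dd j : ℝ) / (N : ℝ)) • v j := by
  have hs4 : dd 0 + dd 1 + dd 2 + dd 3 = N := by
    rw [← hsum, Fin.sum_univ_four]
  have hN : 0 < N := by
    have h0 := hpos 0; have h1 := hpos 1; have h2 := hpos 2; have h3 := hpos 3
    omega
  have hNR : (0:ℝ) < (N:ℝ) := by exact_mod_cast hN
  have hNne : (N:ℝ) ≠ 0 := ne_of_gt hNR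
  have hcop : ∀ j, IsCoprime (dd j) N := fun j => Int.isCoprime_iff_gcd_eq_one.mpr (hgcd j)
  obtain ⟨e, k, hek⟩ := hcop 3
  set A : ℤ := -(dd 1) * e with hA
  set B : ℤ := -(dd 2) * e with hB
  have he : IsCoprime e N := by
    refine ⟨dd 3, k, ?_⟩
    linear_combination hek
  have hcopA : IsCoprime A N := ((hcop 1).neg_left).mul_left he
  have hcopB : IsCoprime B N := ((hcop 2).neg_left).mul_left he
  have hABid : A + B - 1 = dd 0 * e + N * (-(e + k)) := by
    rw [hA, hB]; linear_combination (-e) * hs4 + hek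
  have hcopAB : IsCoprime (A + B - 1) N := by
    rw [hABid]
    exact ((hcop 0).mul_left he).add_mul_left_left (-(e + k))
  have key1 : dd 1 + A * dd 3 = dd 1 * k * N := by
    rw [hA]; linear_combination (-(dd 1)) * hek
  have key2 : dd 2 + B * dd 3 = dd 2 * k * N := by
    rw [hB]; linear_combination (-(dd 2)) * hek
  set V : Fin 4 → Fin 3 → ℤ := ![![0,0,0],![1,0,0],![0,1,0],![A,B,N]] with hV
  set v : Fin 4 → Fin 3 → ℝ := fun j i => ((V j i : ℤ) : ℝ) with hv
  set W : Fin 3 → ℤ := ![dd 1 * k, dd 2 * k, dd 3] with hW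
  set w : Fin 3 → ℝ := fun i => ((W i : ℤ) : ℝ) with hw
  -- affine independence
  have hind : AffineIndependent ℝ v := by
    rw [affineIndependent_iff_of_fintype]
    intro wt hw0 hcomb i
    rw [Finset.weightedVSub_eq_linear_combination _ hw0] at hcomb
    have hc0 := congrFun hcomb 0
    have hc1 := congrFun hcomb 1
    have hc2 := congrFun hcomb 2
    simp [Fin.sum_univ_four, hv, hV, -mul_eq_zero] at hc0 hc1 hc2
    rw [Fin.sum_univ_four] at hw0
    have h3 : wt 3 = 0 := by
      rcases mul_eq_zero.mp hc2 with h | h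
      · exact h
      · exact absurd h hNne
    have h1 : wt 1 = 0 := by rw [h3] at hc0; simpa using hc0
    have h2 : wt 2 = 0 := by rw [h3] at hc1; simpa using hc1
    have h0 : wt 0 = 0 := by rw [h1, h2, h3] at hw0; simpa using hw0
    fin_cases i <;> assumption
  have htot : affineSpan ℝ (Set.range v) = ⊤ := by
    rw [hind.affineSpan_eq_top_iff_card_eq_finrank_add_one]
    simp [Module.finrank_pi]
  set b : AffineBasis (Fin 4) ℝ (Fin 3 → ℝ) := ⟨v, hind, htot⟩ with hb
  have hbv : ⇑b = v := rfl
  have hTet : tetSet v = convexHull ℝ (Set.range v) := rfl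
  have hInt : interior (tetSet v) = {x | ∀ j, 0 < b.coord j x} := by
    rw [hTet, ← hbv, b.interior_convexHull]
  have hHull : tetSet v = {x | ∀ j, 0 ≤ b.coord j x} := by
    rw [hTet, ← hbv, b.convexHull_eq_nonneg_coord]
  -- w as a convex combination
  have key1R : ((dd 1 : ℝ) + (A:ℝ) * (dd 3 : ℝ)) = (dd 1 : ℝ) * (k:ℝ) * (N:ℝ) := by
    exact_mod_cast key1
  have key2R : ((dd 2 : ℝ) + (B:ℝ) * (dd 3 : ℝ)) = (dd 2 : ℝ) * (k:ℝ) * (N:ℝ) := by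
    exact_mod_cast key2
  have hwsum : w = ∑ j, ((dd j : ℝ) / (N : ℝ)) • v j := by
    funext i
    rw [Finset.sum_apply]
    fin_cases i <;>
      simp [Fin.sum_univ_four, hv, hV, hw, hW] <;>
      field_simp
    · linear_combination -key1R
    · linear_combination -key2R
  have hw1 : ∑ j, ((dd j : ℝ) / (N : ℝ)) = 1 := by
    rw [← Finset.sum_div]
    have : (∑ j, (dd j : ℝ)) = (N : ℝ) := by exact_mod_cast hsum
    rw [this]; field_simp
  have hcoordw : ∀ j, b.coord j w = (dd j : ℝ) / (N : ℝ) := by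
    intro j
    have h2 : (Finset.univ.affineCombination ℝ ⇑b fun j => (dd j : ℝ) / (N : ℝ)) = w := by
      rw [Finset.univ.affineCombination_eq_linear_combination _ _ hw1, hbv]
      exact hwsum.symm
    rw [← h2, b.coord_apply_combination_of_mem (Finset.mem_univ j) hw1]
  have hwint : w ∈ interior (tetSet v) := by
    rw [hInt]
    intro j
    rw [hcoordw]
    have := hpos j
    positivity
  -- cleanness
  have hclean : CleanTet v := by
    intro x hx hlat
    have hclosed : IsClosed (tetSet v) := ((Set.finite_range v).isCompact_convexHull (𝕜 := ℝ)).isClosed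
    have hxhull : x ∈ tetSet v := hclosed.frontier_subset hx
    have hnonneg : ∀ j, 0 ≤ b.coord j x := by rwa [hHull] at hxhull
    have hnotint : x ∉ interior (tetSet v) := hx.2
    obtain ⟨j0, hj0⟩ : ∃ j, b.coord j x = 0 := by
      by_contra h
      push_neg at h
      exact hnotint (by
        rw [hInt]
        exact fun j => lt_of_le_of_ne (hnonneg j) (Ne.symm (h j)))
    choose z hz using hlat
    have E : ∀ i, x i = b.coord 0 x * v 0 i + b.coord 1 x * v 1 i + b.coord 2 x * v 2 i
        + b.coord 3 x * v 3 i := by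
      intro i
      have h := congrFun (b.linear_combination_coord_eq_self x).symm i
      simpa [Fin.sum_univ_four, hbv] using h
    have rsum : b.coord 0 x + b.coord 1 x + b.coord 2 x + b.coord 3 x = 1 := by
      have h := b.sum_coord_apply_eq_one x
      rwa [Fin.sum_univ_four] at h
    have r0 : (z 0 : ℝ) = b.coord 1 x + b.coord 3 x * (A : ℝ) := by
      have h := E 0
      rw [hz 0] at h
      simp [hv, hV] at h
      linear_combination h
    have r1 : (z 1 : ℝ) = b.coord 2 x + b.coord 3 x * (B : ℝ) := by
      have h := E 1
      rw [hz 1] at h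
      simp [hv, hV] at h
      linear_combination h
    have r2 : (z 2 : ℝ) = b.coord 3 x * (N : ℝ) := by
      have h := E 2
      rw [hz 2] at h
      simp [hv, hV] at h
      linear_combination h
    have hz2_0 : 0 ≤ z 2 := by
      have : (0:ℝ) ≤ (z 2 : ℝ) := by
        rw [r2]; exact mul_nonneg (hnonneg 3) (le_of_lt hNR)
      exact_mod_cast this
    have hz2_N : z 2 ≤ N := by
      have hl3 : b.coord 3 x ≤ 1 := by
        have := hnonneg 0; have := hnonneg 1; have := hnonneg 2; linarith
      have : (z 2 : ℝ) ≤ (N : ℝ) := by nlinarith [r2]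
      exact_mod_cast this
    have hfin : ∀ m : Fin 4, (∀ i, V m i = z i) → x ∈ Set.range v := by
      intro m hm
      refine ⟨m, funext fun i => ?_⟩
      show ((V m i : ℤ) : ℝ) = x i
      rw [hm i, hz i]
    have hz2cases : z 2 = 0 ∨ z 2 = N := by
      have hj4 : j0 = 0 ∨ j0 = 1 ∨ j0 = 2 ∨ j0 = 3 := by fin_cases j0 <;> simp
      rcases hj4 with rfl | rfl | rfl | rfl
      · -- coord 0 = 0
        have hNz : ((N * (z 0 + z 1) : ℤ) : ℝ) = ((N + (A + B - 1) * z 2 : ℤ) : ℝ) := by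
          push_cast
          linear_combination (N:ℝ) * r0 + (N:ℝ) * r1 - ((A:ℝ) + (B:ℝ) - 1) * r2
            - (N:ℝ) * hj0 + (N:ℝ) * rsum
        have hNzI : N * (z 0 + z 1) = N + (A + B - 1) * z 2 := by exact_mod_cast hNz
        have hdvd : N ∣ (A + B - 1) * z 2 := by
          refine ⟨z 0 + z 1 - 1, ?_⟩
          linear_combination -hNzI
        exact stmt5_aux_dvd hN (hcopAB.symm.dvd_of_dvd_mul_left hdvd) hz2_0 hz2_N
      · -- coord 1 = 0
        have hNz : ((N * z 0 : ℤ) : ℝ) = ((A * z 2 : ℤ) : ℝ) := by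
          push_cast
          linear_combination (N:ℝ) * r0 - (A:ℝ) * r2 + (N:ℝ) * hj0
        have hNzI : N * z 0 = A * z 2 := by exact_mod_cast hNz
        have hdvd : N ∣ A * z 2 := by
          refine ⟨z 0, ?_⟩
          linear_combination -hNzI
        exact stmt5_aux_dvd hN (hcopA.symm.dvd_of_dvd_mul_left hdvd) hz2_0 hz2_N
      · -- coord 2 = 0
        have hNz : ((N * z 1 : ℤ) : ℝ) = ((B * z 2 : ℤ) : ℝ) := by
          push_cast
          linear_combination (N:ℝ) * r1 - (B:ℝ) * r2 + (N:ℝ) * hj0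
        have hNzI : N * z 1 = B * z 2 := by exact_mod_cast hNz
        have hdvd : N ∣ B * z 2 := by
          refine ⟨z 1, ?_⟩
          linear_combination -hNzI
        exact stmt5_aux_dvd hN (hcopB.symm.dvd_of_dvd_mul_left hdvd) hz2_0 hz2_N
      · -- coord 3 = 0
        left
        have : (z 2 : ℝ) = 0 := by rw [r2, hj0]; ring
        exact_mod_cast this
    rcases hz2cases with h2 | h2
    · -- z 2 = 0 : x is one of the base vertices
      have hl3 : b.coord 3 x = 0 := by
        have : b.coord 3 x * (N : ℝ) = 0 := by
          rw [← r2, h2]; simp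
        rcases mul_eq_zero.mp this with h | h
        · exact h
        · exact absurd h hNne
      have hz0R : (z 0 : ℝ) = b.coord 1 x := by rw [r0, hl3]; ring
      have hz1R : (z 1 : ℝ) = b.coord 2 x := by rw [r1, hl3]; ring
      have hz0_0 : 0 ≤ z 0 := by
        have : (0:ℝ) ≤ (z 0 : ℝ) := hz0R ▸ hnonneg 1
        exact_mod_cast this
      have hz1_0 : 0 ≤ z 1 := by
        have : (0:ℝ) ≤ (z 1 : ℝ) := hz1R ▸ hnonneg 2
        exact_mod_cast this
      have hzsum : z 0 + z 1 ≤ 1 := by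
        have h0 := hnonneg 0
        have : ((z 0 + z 1 : ℤ) : ℝ) ≤ 1 := by
          push_cast
          rw [hz0R, hz1R]
          linarith [rsum, hl3]
        exact_mod_cast this
      have hcases : (z 0 = 0 ∧ z 1 = 0) ∨ (z 0 = 1 ∧ z 1 = 0) ∨ (z 0 = 0 ∧ z 1 = 1) := by omega
      rcases hcases with ⟨ha0, ha1⟩ | ⟨ha0, ha1⟩ | ⟨ha0, ha1⟩
      · exact hfin 0 (fun i => by fin_cases i <;> simp [hV] <;> omega)
      · exact hfin 1 (fun i => by fin_cases i <;> simp [hV] <;> omega)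
      · exact hfin 2 (fun i => by fin_cases i <;> simp [hV] <;> omega)
    · -- z 2 = N : x is the apex
      have hl3 : b.coord 3 x = 1 := by
        have hh : b.coord 3 x * (N : ℝ) = 1 * (N : ℝ) := by
          rw [← r2, h2]; ring
        exact mul_right_cancel₀ hNne hh
      have hl1 : b.coord 1 x = 0 := by
        have h0 := hnonneg 0; have h1 := hnonneg 1; have h2' := hnonneg 2
        linarith [rsum, hl3]
      have hl2 : b.coord 2 x = 0 := by
        have h0 := hnonneg 0; have h1 := hnonneg 1; have h2' := hnonneg 2
        linarith [rsum, hl3]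
      have hz0A : z 0 = A := by
        have : (z 0 : ℝ) = (A : ℝ) := by rw [r0, hl1, hl3]; ring
        exact_mod_cast this
      have hz1B : z 1 = B := by
        have : (z 1 : ℝ) = (B : ℝ) := by rw [r1, hl2, hl3]; ring
        exact_mod_cast this
      exact hfin 3 (fun i => by fin_cases i <;> simp [hV] <;> omega)
  exact ⟨v, ⟨fun j i => ⟨V j i, rfl⟩, hind⟩, hclean,
    w, hwint, fun i => ⟨W i, rfl⟩, hwsum⟩
end

section
/- Let T be a 1-point lattice tetrahedron whose unique interior lattice point w satisfies BC_T(w) = (d₁/N, d₂/N, d₃/N, d₄/N), where d₁, d₂, d₃, d₄ are positive integers with d₁ + d₂ + d₃ + d₄ = N and gcd(dⱼ, N) = 1 for each j. Then for each index i ∈ {1,2,3,4}, dᵢ divides the sum of some two of the three numbers dⱼ with j ≠ i. -/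
open scoped BigOperators

/-! Integer helpers -/

private lemma emod_pos_of_not_dvd {N x : ℤ} (hN : 0 < N) (h : ¬ N ∣ x) : 1 ≤ x % N := by
  have h0 : 0 ≤ x % N := Int.emod_nonneg x (by omega)
  have h1 : x % N ≠ 0 := fun hc => h (Int.dvd_of_emod_eq_zero hc)
  omega

private lemma not_dvd_mul_of_coprime {N x t : ℤ} (hco : IsCoprime x N) (ht1 : 1 ≤ t)
    (htN : t < N) : ¬ N ∣ t * x := by
  intro hdvd
  have h2 : N ∣ t := (hco.symm).dvd_of_dvd_mul_right hdvd
  have := Int.le_of_dvd (by omega) h2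
  omega

private lemma neg_emod_eq {N x : ℤ} (hN : 0 < N) (h : ¬ N ∣ x) : (-x) % N = N - x % N := by
  have h1 : 1 ≤ x % N := emod_pos_of_not_dvd hN h
  have h2 : x % N < N := Int.emod_lt_of_pos x hN
  have key : (-x) % N = (N - x % N) % N := by
    have hd : N ∣ (N - x % N) - (-x) := by
      refine ⟨1 + x / N, ?_⟩
      have := Int.emod_def x N
      linarith
    exact Int.modEq_iff_dvd.mpr hd
  rw [key, Int.emod_eq_of_lt (by omega) (by omega)]

private lemma mul_emod_emod (t y N : ℤ) : (t * (y % N)) % N = (t * y) % N := by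
  rw [Int.mul_emod t (y % N) N, Int.emod_emod_of_dvd y (dvd_refl N), ← Int.mul_emod]

private lemma emod_eq_emod_of_dvd {N x y : ℤ} (h : N ∣ y - x) : x % N = y % N :=
  Int.modEq_iff_dvd.mpr h

private lemma not_dvd_self_coprime {N z : ℤ} (h : IsCoprime z N) (hN : 2 ≤ N) : ¬ N ∣ z := by
  intro hd
  have := Int.isUnit_iff.mp (h.isUnit_of_dvd' hd dvd_rfl)
  omega

/-! The record-pair (Stern–Brocot) argument -/

private lemma records_terminal {N u A Q t s m M : ℤ}
    (hA : 1 ≤ A) (hu1 : 2*A + 1 ≤ u) (hu2 : 2*u + 1 ≤ N)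
    (hQ3 : 3 ≤ Q) (hQub : N ≤ (A+1)*Q + A)
    (hm : m = (t*u) % N) (hM : M = N - (s*u) % N)
    (hinv : t*M + s*m = N) (ht1 : 1 ≤ t) (hs1 : 1 ≤ s) (htQ : t ≤ Q) (hsQ : s ≤ Q)
    (hft : t = 1 → m = u) (hfs : s = 1 → M = N - u)
    (hterm : Q + 1 ≤ t + s)
    (hno : ∀ τ : ℤ, 1 ≤ τ → τ ≤ Q → A*τ + 1 ≤ (τ*u) % N) : False := by
  have hN : 0 < N := by linarith
  have hm1 : A*t + 1 ≤ m := hm ▸ hno t ht1 htQ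
  have hsu : A*s + 1 ≤ (s*u) % N := hno s hs1 hsQ
  have hM1 : 1 ≤ M := by
    have : (s*u) % N < N := Int.emod_lt_of_pos _ hN
    omega
  have hMub : M ≤ N - A*s - 1 := by omega
  rcases eq_or_lt_of_le ht1 with ht | ht2
  · -- t = 1
    have hmu : m = u := hft ht.symm
    have hsQ' : Q ≤ s := by omega
    have h1 : 1 + s * u ≤ N := by nlinarith
    have h2 : Q * (2*A+1) ≤ s * u := by
      have := mul_le_mul hsQ' hu1 (by linarith) (by linarith)
      linarith
    nlinarith
  · rcases eq_or_lt_of_le hs1 with hs | hs2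
    · -- s = 1
      have hMu : M = N - u := hfs hs.symm
      have h2t : 2 ≤ t := ht2
      have hNu : (0:ℤ) ≤ N - u := by linarith
      have : 2*(N-u) ≤ t*(N-u) := mul_le_mul_of_nonneg_right h2t hNu
      nlinarith
    · -- t ≥ 2, s ≥ 2
      have e1 : A*(s*t) + s ≤ s*m := by nlinarith
      have e2 : t ≤ t*M := by nlinarith
      have e3 : 0 ≤ (t-2)*(s-2) := mul_nonneg (by omega) (by omega)
      have e4 : A*(2*t + 2*s - 4) ≤ A*(s*t) := by nlinarith
      have e5 : (2*A+1)*(Q+1) ≤ (2*A+1)*(t+s) := by nlinarith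
      nlinarith

private lemma records_loop {N u A Q : ℤ}
    (hA : 1 ≤ A) (hu1 : 2*A + 1 ≤ u) (hu2 : 2*u + 1 ≤ N) (hco : IsCoprime u N)
    (hQ3 : 3 ≤ Q) (hQub : N ≤ (A+1)*Q + A) (hQN : Q < N)
    (hno : ∀ τ : ℤ, 1 ≤ τ → τ ≤ Q → A*τ + 1 ≤ (τ*u) % N) :
    ∀ n : ℕ, ∀ t s m M : ℤ, m = (t*u) % N → M = N - (s*u) % N → t*M + s*m = N →
      1 ≤ t → 1 ≤ s → t ≤ Q → s ≤ Q → (t = 1 → m = u) → (s = 1 → M = N - u) →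
      Q + 1 ≤ t + s + n → False := by
  intro n
  induction n with
  | zero =>
    intro t s m M hm hM hinv ht1 hs1 htQ hsQ hft hfs hterm
    exact records_terminal hA hu1 hu2 hQ3 hQub hm hM hinv ht1 hs1 htQ hsQ hft hfs
      (by push_cast at hterm; omega) hno
  | succ n ih =>
    intro t s m M hm hM hinv ht1 hs1 htQ hsQ hft hfs hterm
    have hN : 0 < N := by linarith
    by_cases hts : Q + 1 ≤ t + s
    · exact records_terminal hA hu1 hu2 hQ3 hQub hm hM hinv ht1 hs1 htQ hsQ hft hfs hts hno
    push_neg at hts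
    have htsQ : t + s ≤ Q := by omega
    have hndvd : ¬ N ∣ (t+s)*u := not_dvd_mul_of_coprime hco (by omega) (by omega)
    have hndvd_t : ¬ N ∣ t*u := not_dvd_mul_of_coprime hco ht1 (by omega)
    have hndvd_s : ¬ N ∣ s*u := not_dvd_mul_of_coprime hco hs1 (by omega)
    have hval1 : 1 ≤ ((t+s)*u) % N := emod_pos_of_not_dvd hN hndvd
    have hm1 : 1 ≤ m := hm ▸ emod_pos_of_not_dvd hN hndvd_t
    have hmN : m < N := hm ▸ Int.emod_lt_of_pos _ hN
    have hM1 : 1 ≤ M := by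
      have : (s*u) % N < N := Int.emod_lt_of_pos _ hN
      omega
    have hMN : M < N := by
      have : 1 ≤ (s*u) % N := emod_pos_of_not_dvd hN hndvd_s
      omega
    have hkey : ((t+s)*u) % N = (m + (N - M)) % N := by
      rw [show (t+s)*u = t*u + s*u by ring, Int.add_emod, ← hm, show (s*u) % N = N - M by omega]
    have hmM : m ≠ M := by
      intro hEq
      rw [hkey, hEq, show M + (N - M) = N by ring, Int.emod_self] at hval1
      omega
    rcases lt_or_gt_of_ne hmM with hlt | hgt
    · -- m < M : update s
      have hval : ((t+s)*u) % N = m + (N - M) := by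
        rw [hkey, Int.emod_eq_of_lt (by omega) (by omega)]
      refine ih t (t+s) m (M - m) hm (by omega) (by linarith [hinv]; ) ht1 (by omega) htQ htsQ
        hft (by omega) (by push_cast at hterm ⊢; omega)
    · -- m > M : update t
      have hval : ((t+s)*u) % N = m - M := by
        rw [hkey, show m + (N - M) = (m - M) + N * 1 by ring, Int.add_mul_emod_self_left,
          Int.emod_eq_of_lt (by omega) (by omega)]
      refine ih (t+s) s (m - M) M (by omega) hM (by linarith [hinv]) (by omega) hs1 htsQ hsQ
        (by omega) hfs (by push_cast at hterm ⊢; omega)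

private lemma lemL {N u A : ℤ} (hA : 1 ≤ A) (hu1 : 2*A + 1 ≤ u) (hu2 : 2*u + 1 ≤ N)
    (hco : IsCoprime u N)
    (hno : ∀ τ : ℤ, 1 ≤ τ → τ ≤ N / (A+1) → A*τ + 1 ≤ (τ*u) % N) : False := by
  have hA1 : (0:ℤ) < A + 1 := by omega
  have hN : 0 < N := by linarith
  set Q := N / (A+1) with hQdef
  have hQ3 : 3 ≤ Q := by
    rw [hQdef, Int.le_ediv_iff_mul_le hA1]; linarith
  have hQub : N ≤ (A+1)*Q + A := by
    have h1 := Int.mul_ediv_add_emod N (A+1)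
    have h2 : N % (A+1) < A+1 := Int.emod_lt_of_pos _ hA1
    rw [hQdef]; linarith
  have hQlb : (A+1)*Q ≤ N := by
    have h1 := Int.mul_ediv_add_emod N (A+1)
    have h2 : 0 ≤ N % (A+1) := Int.emod_nonneg _ (by omega)
    rw [hQdef]; linarith
  have hQN : Q < N := by nlinarith
  have htn : ((Q-1).toNat : ℤ) = Q - 1 := Int.toNat_of_nonneg (by omega)
  refine records_loop hA hu1 hu2 hco hQ3 hQub hQN hno (Q-1).toNat 1 1 u (N - u)
    ?_ ?_ (by ring) le_rfl le_rfl (by omega) (by omega) (fun _ => rfl) (fun _ => rfl)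
    (by rw [htn]; omega)
  · rw [one_mul, Int.emod_eq_of_lt (by linarith) (by linarith)]
  · rw [one_mul, Int.emod_eq_of_lt (by linarith) (by linarith)]

private lemma core2 {N a γ B C : ℤ} (hγ2 : 2 ≤ γ) (hγC : γ ≤ C)
    (hcopB : IsCoprime B N) (hcopC : IsCoprime C N)
    (hsum : γ + B + C = N + 1)
    (hbig : N < 2*B)
    (hqa : N/γ ≤ a - 1)
    (hstep1 : ∀ t, 1 ≤ t → t ≤ N/γ → (t*γ) % N = t*γ)
    (hcond : ∀ t, 1 ≤ t → t ≤ a - 1 → (t*γ)%N + (t*B)%N + (t*C)%N = N + t)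
    (hN : 0 < N) : False := by
  have hu : N - B = γ + C - 1 := by omega
  have hcopu : IsCoprime (N - B) N := by
    have h1 : IsCoprime (-B) N := hcopB.neg_left
    have h2 := h1.add_mul_left_left 1
    rwa [show -B + N * 1 = N - B by ring] at h2
  have hγA : γ - 1 + 1 = γ := by ring
  refine lemL (N := N) (u := N - B) (A := γ - 1) (by omega) (by omega) (by omega) hcopu ?_
  intro t ht1 htQ
  rw [hγA] at htQ
  have h3 := hstep1 t ht1 htQ
  have htγ : t*γ < N := by
    have := Int.emod_lt_of_pos (t*γ) hN
    omega
  have htN : t < N := by nlinarith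
  have h2 := hcond t ht1 (le_trans htQ hqa)
  have hndvdu : ¬ N ∣ t*(N-B) := not_dvd_mul_of_coprime hcopu ht1 htN
  have hndvdC : ¬ N ∣ t*C := not_dvd_mul_of_coprime hcopC ht1 htN
  have h4 : (t*B) % N = N - (t*(N-B)) % N := by
    have e1 : (t*B) % N = (-(t*(N-B))) % N := by
      refine emod_eq_emod_of_dvd ⟨-t, by ring⟩
    rw [e1, neg_emod_eq hN hndvdu]
  have h5 : 1 ≤ (t*C) % N := emod_pos_of_not_dvd hN hndvdC
  have hAt : (γ-1)*t = t*γ - t := by ring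
  omega

private lemma core1 {N a γ B C : ℤ} (ha2 : 2 ≤ a) (h2a : 2*a < N)
    (hγ1 : 1 ≤ γ) (hγB : γ ≤ B) (hγC : γ ≤ C)
    (hcopγ : IsCoprime γ N) (hcopB : IsCoprime B N) (hcopC : IsCoprime C N)
    (hsum : γ + B + C = N + 1)
    (hcond : ∀ t, 1 ≤ t → t ≤ a - 1 → (t*γ)%N + (t*B)%N + (t*C)%N = N + t) :
    a * γ < N := by
  have hN : 0 < N := by linarith
  rcases eq_or_lt_of_le hγ1 with h1 | hγ2
  · rw [← h1]; linarith
  by_contra hcon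
  push_neg at hcon
  have hdvdγ : ¬ γ ∣ N := by
    intro hd
    have := Int.isUnit_iff.mp (hcopγ.isUnit_of_dvd' dvd_rfl hd)
    omega
  have hq1 := Int.mul_ediv_add_emod N γ
  have hq2 : 0 ≤ N % γ := Int.emod_nonneg _ (by omega)
  have hq3 : N % γ < γ := Int.emod_lt_of_pos _ (by omega)
  have hq4 : N % γ ≠ 0 := fun hc => hdvdγ (Int.dvd_of_emod_eq_zero hc)
  have hqγ : γ * (N / γ) < N := by omega
  have hNlt : N < a * γ := by
    rcases eq_or_lt_of_le hcon with h | h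
    · exact absurd ⟨a, by linarith⟩ hdvdγ
    · exact h
  have hqa : N / γ ≤ a - 1 := by
    have h6 : γ * (N / γ) < γ * a := by linarith
    have := lt_of_mul_lt_mul_left h6 (by omega : (0:ℤ) ≤ γ)
    omega
  have hq2' : 2 ≤ N / γ := by
    rw [Int.le_ediv_iff_mul_le (by omega : (0:ℤ) < γ)]; linarith
  have hstep1 : ∀ t, 1 ≤ t → t ≤ N / γ → (t*γ) % N = t*γ := by
    intro t ht1 htq
    have h5 : t * γ ≤ (N / γ) * γ := mul_le_mul_of_nonneg_right htq (by omega)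
    exact Int.emod_eq_of_lt (by nlinarith) (by nlinarith)
  -- analyse t = 2
  have hBub : B ≤ N - 1 := by omega
  have hCub : C ≤ N - 1 := by omega
  have h2le : (2:ℤ) ≤ a - 1 := by omega
  have hc2 := hcond 2 (by norm_num) h2le
  rw [hstep1 2 (by norm_num) hq2'] at hc2
  have hBne : 2*B ≠ N := by
    intro hEq
    have : B ∣ N := ⟨2, by linarith⟩
    have := Int.isUnit_iff.mp (hcopB.isUnit_of_dvd' dvd_rfl this)
    omega
  have hCne : 2*C ≠ N := by
    intro hEq
    have : C ∣ N := ⟨2, by linarith⟩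
    have := Int.isUnit_iff.mp (hcopC.isUnit_of_dvd' dvd_rfl this)
    omega
  have hBcase : (2*B) % N = 2*B ∨ (N < 2*B ∧ (2*B) % N = 2*B - N) := by
    rcases lt_or_ge (2*B) N with h | h
    · exact Or.inl (Int.emod_eq_of_lt (by omega) h)
    · refine Or.inr ⟨by omega, ?_⟩
      rw [show 2*B = (2*B - N) + N*1 by ring, Int.add_mul_emod_self_left,
        Int.emod_eq_of_lt (by omega) (by omega)]
      ring
  have hCcase : (2*C) % N = 2*C ∨ (N < 2*C ∧ (2*C) % N = 2*C - N) := by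
    rcases lt_or_ge (2*C) N with h | h
    · exact Or.inl (Int.emod_eq_of_lt (by omega) h)
    · refine Or.inr ⟨by omega, ?_⟩
      rw [show 2*C = (2*C - N) + N*1 by ring, Int.add_mul_emod_self_left,
        Int.emod_eq_of_lt (by omega) (by omega)]
      ring
  rcases hBcase with hB | ⟨hBbig, hB⟩
  · rcases hCcase with hC | ⟨hCbig, hC⟩
    · omega
    · -- C is the big one; swap roles of B and C
      exact core2 (a := a) hγ2 hγB hcopC hcopB (by omega) hCbig hqa hstep1
        (fun t h1 h2 => by have := hcond t h1 h2; omega) hN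
  · -- B is the big one
    exact core2 (a := a) hγ2 hγC hcopB hcopC (by omega) hBbig hqa hstep1 hcond hN

private lemma main_arith (N a d1 d2 d3 : ℤ)
    (ha : 0 < a) (hd1 : 0 < d1) (hd2 : 0 < d2) (hd3 : 0 < d3)
    (hsum : a + d1 + d2 + d3 = N)
    (hga : IsCoprime a N) (hg1 : IsCoprime d1 N) (hg2 : IsCoprime d2 N) (hg3 : IsCoprime d3 N)
    (hC : ∀ m : ℤ, ¬(N ∣ m) → ¬(N ∣ m - 1) → ¬(N ∣ m + 1) →
      (m*a) % N + (m*d1) % N + (m*d2) % N + (m*d3) % N = 2*N) :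
    a ∣ (d1 + d2) ∨ a ∣ (d1 + d3) ∨ a ∣ (d2 + d3) := by
  rcases eq_or_lt_of_le (by omega : (1:ℤ) ≤ a) with h1 | ha2
  · exact Or.inl (h1 ▸ one_dvd _)
  have hN0 : (0:ℤ) < N := by omega
  have hN5 : a + 3 ≤ N := by omega
  -- all doubled values < N, via hC 2
  have hdouble : 2*a < N ∧ 2*d1 < N ∧ 2*d2 < N ∧ 2*d3 < N := by
    have h := hC 2 (fun hd => by have := Int.le_of_dvd (by norm_num) hd; omega)
      (fun hd => by have := Int.le_of_dvd (by norm_num) hd; omega)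
      (fun hd => by have := Int.le_of_dvd (by norm_num) hd; omega)
    have ea := Int.emod_def (2*a) N
    have e1 := Int.emod_def (2*d1) N
    have e2 := Int.emod_def (2*d2) N
    have e3 := Int.emod_def (2*d3) N
    have la : 0 ≤ N * (2*a/N) := mul_nonneg (by omega) (Int.ediv_nonneg (by omega) (by omega))
    have l1 : 0 ≤ N * (2*d1/N) := mul_nonneg (by omega) (Int.ediv_nonneg (by omega) (by omega))
    have l2 : 0 ≤ N * (2*d2/N) := mul_nonneg (by omega) (Int.ediv_nonneg (by omega) (by omega))
    have l3 : 0 ≤ N * (2*d3/N) := mul_nonneg (by omega) (Int.ediv_nonneg (by omega) (by omega))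
    have ma := Int.emod_lt_of_pos (2*a) hN0
    have m1 := Int.emod_lt_of_pos (2*d1) hN0
    have m2 := Int.emod_lt_of_pos (2*d2) hN0
    have m3 := Int.emod_lt_of_pos (2*d3) hN0
    refine ⟨?_, ?_, ?_, ?_⟩ <;> omega
  obtain ⟨p, qq, hpq⟩ := hga
  have hm₁ : N ∣ a*p - 1 := ⟨-qq, by linear_combination hpq⟩
  obtain ⟨cc, hcc⟩ := hm₁
  have hm₁ : N ∣ a*p - 1 := ⟨cc, hcc⟩
  have hcop_p : IsCoprime p N := ⟨a, qq, by linear_combination hpq⟩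
  -- the three G's
  set G1 := ((-p)*d1) % N with hG1
  set G2 := ((-p)*d2) % N with hG2
  set G3 := ((-p)*d3) % N with hG3
  have hnd1 : ¬ N ∣ (-p)*d1 := by
    have := not_dvd_self_coprime ((hcop_p.neg_left).mul_left hg1) (by omega)
    rwa [show (-p)*d1 = -p*d1 from rfl] at this
  have hnd2 : ¬ N ∣ (-p)*d2 := not_dvd_self_coprime ((hcop_p.neg_left).mul_left hg2) (by omega)
  have hnd3 : ¬ N ∣ (-p)*d3 := not_dvd_self_coprime ((hcop_p.neg_left).mul_left hg3) (by omega)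
  have hG1pos : 1 ≤ G1 := emod_pos_of_not_dvd hN0 hnd1
  have hG2pos : 1 ≤ G2 := emod_pos_of_not_dvd hN0 hnd2
  have hG3pos : 1 ≤ G3 := emod_pos_of_not_dvd hN0 hnd3
  have hG1lt : G1 < N := Int.emod_lt_of_pos _ hN0
  have hG2lt : G2 < N := Int.emod_lt_of_pos _ hN0
  have hG3lt : G3 < N := Int.emod_lt_of_pos _ hN0
  -- coprimality of G's
  have hcopG : ∀ d : ℤ, IsCoprime d N → IsCoprime (((-p)*d) % N) N := by
    intro d hd
    have h1 : IsCoprime ((-p)*d) N := (hcop_p.neg_left).mul_left hd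
    have h2 := h1.add_mul_left_left (-(((-p)*d)/N))
    rwa [show (-p)*d + N * -(((-p)*d)/N) = ((-p)*d) % N by rw [Int.emod_def]; ring] at h2
  have hcopG1 : IsCoprime G1 N := hcopG d1 hg1
  have hcopG2 : IsCoprime G2 N := hcopG d2 hg2
  have hcopG3 : IsCoprime G3 N := hcopG d3 hg3
  -- N ∣ a*Gk + dk
  have hdk : ∀ d : ℤ, N ∣ a*(((-p)*d) % N) + d := by
    intro d
    have h1 : (a*(((-p)*d) % N)) % N = (a*((-p)*d)) % N := mul_emod_emod a ((-p)*d) N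
    have h2 : (a*(((-p)*d) % N) + d) % N = (a*((-p)*d) + d) % N := by
      rw [Int.add_emod, h1, ← Int.add_emod]
    have h3 : N ∣ a*((-p)*d) + d := ⟨-cc*d, by linear_combination (-d)*hcc⟩
    rw [Int.dvd_iff_emod_eq_zero] at h3 ⊢
    rw [h2]; exact h3
  have hd1' : N ∣ a*G1 + d1 := hdk d1
  have hd2' : N ∣ a*G2 + d2 := hdk d2
  have hd3' : N ∣ a*G3 + d3 := hdk d3
  -- sum of G's
  have hGsum : G1 + G2 + G3 = N + 1 := by
    have h := hC (-p) ?_ ?_ ?_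
    · have hfirst : ((-p)*a) % N = N - 1 := by
        have e1 : ((-p)*a) % N = (-1) % N := emod_eq_emod_of_dvd ⟨cc, by linear_combination hcc⟩
        have e2 : (-1 : ℤ) % N = N - 1 % N := neg_emod_eq hN0 (fun hd => by
          have := Int.le_of_dvd (by norm_num) hd; omega)
        have e3 : (1:ℤ) % N = 1 := Int.emod_eq_of_lt (by norm_num) (by omega)
        omega
      rw [hfirst] at h; omega
    · intro hd
      rw [dvd_neg] at hd
      exact not_dvd_self_coprime hcop_p (by omega) hd
    · intro hd
      have h4 : N ∣ a*(-p - 1) := Dvd.dvd.mul_left hd a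
      have h5 : N ∣ a + 1 := by
        have : a*(-p-1) = -(a*p-1) - (a+1) := by ring
        rw [this] at h4
        have := (dvd_neg.mpr hm₁).sub h4 -- N ∣ (-(a*p-1)) - (-(a*p-1)-(a+1)) = a+1
        rwa [show -(a*p-1) - (-(a*p-1)-(a+1)) = a + 1 by ring] at this
      have := Int.le_of_dvd (by omega) h5
      omega
    · intro hd
      have h4 : N ∣ a*(-p + 1) := Dvd.dvd.mul_left hd a
      have h5 : N ∣ a - 1 := by
        have : a*(-p+1) = -(a*p-1) + (a-1) := by ring
        rw [this] at h4
        have := h4.sub (dvd_neg.mpr hm₁)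
        rwa [show -(a*p-1) + (a-1) - -(a*p-1) = a - 1 by ring] at this
      have := Int.le_of_dvd (by omega) h5
      omega
  -- the t-conditions
  have hcond : ∀ t, 1 ≤ t → t ≤ a - 1 → (t*G1)%N + (t*G2)%N + (t*G3)%N = N + t := by
    intro t ht1 hta
    have htN : t < N := by omega
    have h := hC ((-p)*t) ?_ ?_ ?_
    · have hfirst : (((-p)*t)*a) % N = N - t := by
        have e1 : (((-p)*t)*a) % N = (-t) % N := emod_eq_emod_of_dvd ⟨cc*t, by linear_combination t*hcc⟩
        have e2 : (-t) % N = N - t % N := neg_emod_eq hN0 (fun hd => by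
          have := Int.le_of_dvd (by omega) hd; omega)
        have e3 : t % N = t := Int.emod_eq_of_lt (by omega) htN
        omega
      have hrw1 : (t*G1)%N = (((-p)*t)*d1) % N := by
        rw [hG1, mul_emod_emod, show t*((-p)*d1) = ((-p)*t)*d1 by ring]
      have hrw2 : (t*G2)%N = (((-p)*t)*d2) % N := by
        rw [hG2, mul_emod_emod, show t*((-p)*d2) = ((-p)*t)*d2 by ring]
      have hrw3 : (t*G3)%N = (((-p)*t)*d3) % N := by
        rw [hG3, mul_emod_emod, show t*((-p)*d3) = ((-p)*t)*d3 by ring]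
      rw [hrw1, hrw2, hrw3]
      rw [hfirst] at h
      omega
    · intro hd
      have : N ∣ t*p := by
        rwa [show (-p)*t = -(t*p) by ring, dvd_neg] at hd
      exact not_dvd_mul_of_coprime hcop_p ht1 htN this
    · intro hd
      -- N ∣ -p*t - 1  ⟹  N ∣ t + a
      have h4 : N ∣ a*((-p)*t - 1) := Dvd.dvd.mul_left hd a
      have h5 : N ∣ t + a := by
        have : a*((-p)*t - 1) = -(t*(a*p-1)) - (t + a) := by ring
        rw [this] at h4
        have h6 : N ∣ -(t*(a*p-1)) := dvd_neg.mpr (Dvd.dvd.mul_left hm₁ t)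
        have := h6.sub h4
        rwa [show -(t*(a*p-1)) - (-(t*(a*p-1)) - (t+a)) = t + a by ring] at this
      have := Int.le_of_dvd (by omega) h5
      omega
    · intro hd
      have h4 : N ∣ a*((-p)*t + 1) := Dvd.dvd.mul_left hd a
      have h5 : N ∣ a - t := by
        have : a*((-p)*t + 1) = -(t*(a*p-1)) + (a - t) := by ring
        rw [this] at h4
        have h6 : N ∣ -(t*(a*p-1)) := dvd_neg.mpr (Dvd.dvd.mul_left hm₁ t)
        have := h4.sub h6
        rwa [show -(t*(a*p-1)) + (a-t) - -(t*(a*p-1)) = a - t by ring] at this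
      have := Int.le_of_dvd (by omega) h5
      omega
  -- conclude: the minimal G gives the divisibility
  have final : ∀ G d : ℤ, N ∣ a*G + d → a*G < N → 0 < d → d < N → 1 ≤ G → a*G = N - d := by
    intro G d hdvd hlt hdpos hdlt hG1'
    obtain ⟨c, hc⟩ := hdvd
    have hc1 : 0 < N*c := by nlinarith
    have hc2 : N*c < 2*N := by nlinarith
    have : c = 1 := by nlinarith
    rw [this] at hc; omega
  have hdlt1 : d1 < N := by omega
  have hdlt2 : d2 < N := by omega
  have hdlt3 : d3 < N := by omega
  rcases le_total G1 G2 with h12 | h12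
  · rcases le_total G1 G3 with h13 | h13
    · -- G1 minimal
      have hmin := core1 ha2 hdouble.1 hG1pos h12 h13 hcopG1 hcopG2 hcopG3 hGsum hcond
      have := final G1 d1 hd1' hmin hd1 hdlt1 hG1pos
      exact Or.inr (Or.inr ⟨G1 - 1, by linarith [hsum]⟩)
    · -- G3 minimal
      have hmin := core1 ha2 hdouble.1 hG3pos (by omega) (by omega) hcopG3 hcopG1 hcopG2 (by omega)
        (fun t h1 h2 => by have := hcond t h1 h2; omega)
      have := final G3 d3 hd3' hmin hd3 hdlt3 hG3pos
      exact Or.inl ⟨G3 - 1, by linarith [hsum]⟩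
  · rcases le_total G2 G3 with h23 | h23
    · -- G2 minimal
      have hmin := core1 ha2 hdouble.1 hG2pos (by omega) (by omega) hcopG2 hcopG1 hcopG3 (by omega)
        (fun t h1 h2 => by have := hcond t h1 h2; omega)
      have := final G2 d2 hd2' hmin hd2 hdlt2 hG2pos
      exact Or.inr (Or.inl ⟨G2 - 1, by linarith [hsum]⟩)
    · -- G3 minimal
      have hmin := core1 ha2 hdouble.1 hG3pos (by omega) (by omega) hcopG3 hcopG1 hcopG2 (by omega)
        (fun t h1 h2 => by have := hcond t h1 h2; omega)
      have := final G3 d3 hd3' hmin hd3 hdlt3 hG3pos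
      exact Or.inl ⟨G3 - 1, by linarith [hsum]⟩

theorem stmt11 (v : Fin 4 → Fin 3 → ℝ) (h : OnePointTet v)
    (w : Fin 3 → ℝ) (hw : w ∈ interior (tetSet v)) (hwl : IsLatticePoint w)
    (N : ℤ) (dd : Fin 4 → ℤ) (hpos : ∀ j, 0 < dd j) (hsum : (∑ j, dd j) = N)
    (hgcd : ∀ j, Int.gcd (dd j) N = 1)
    (hBC : w = ∑ j, ((dd j : ℝ) / (N : ℝ)) • v j) :
    ∀ i : Fin 4, ∃ j k : Fin 4, j ≠ i ∧ k ≠ i ∧ j ≠ k ∧ dd i ∣ (dd j + dd k) := by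
  obtain ⟨⟨hlat, hAI⟩, hclean, huniq⟩ := h
  have hsum4 : dd 0 + dd 1 + dd 2 + dd 3 = N := by rw [← hsum, Fin.sum_univ_four]
  have hp0 := hpos 0; have hp1 := hpos 1; have hp2 := hpos 2; have hp3 := hpos 3
  have hN0 : (0:ℤ) < N := by omega
  have hddlt : ∀ j, dd j < N := by
    intro j
    fin_cases j
    · show dd 0 < N; omega
    · show dd 1 < N; omega
    · show dd 2 < N; omega
    · show dd 3 < N; omega
  have hNR : ((N:ℝ)) ≠ 0 := Int.cast_ne_zero.mpr (by omega)
  have htop : affineSpan ℝ (Set.range v) = ⊤ := by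
    rw [hAI.affineSpan_eq_top_iff_card_eq_finrank_add_one]
    simp [Module.finrank_fin_fun]
  set b : AffineBasis (Fin 4) ℝ (Fin 3 → ℝ) := ⟨v, hAI, htop⟩ with hbdef
  have hcoord : ∀ (r : Fin 4 → ℝ), (∑ j, r j) = 1 → ∀ j, b.coord j (∑ k, r k • v k) = r j := by
    intro r hr j
    have h1 : (Finset.univ : Finset (Fin 4)).affineCombination ℝ v r = ∑ k, r k • v k :=
      Finset.univ.affineCombination_eq_linear_combination v r hr
    rw [← h1]
    exact b.coord_apply_combination_of_mem (Finset.mem_univ j) hr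
  have hint : interior (tetSet v) = {x | ∀ j, 0 < b.coord j x} := by
    have := b.interior_convexHull
    exact this
  have hcop : ∀ j, IsCoprime (dd j) N := fun j => Int.isCoprime_iff_gcd_eq_one.mpr (hgcd j)
  have hsumdivN : ∑ j, (dd j:ℝ)/(N:ℝ) = 1 := by
    rw [← Finset.sum_div]
    rw [show ∑ j, ((dd j : ℤ):ℝ) = ((∑ j, dd j : ℤ) : ℝ) by push_cast; ring]
    rw [hsum]; field_simp
  have hwc : ∀ c, w c = ∑ j, (dd j : ℝ)/(N:ℝ) * v j c := by
    intro c; rw [hBC]; simp [Finset.sum_apply]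
  -- Key step: if the residues of m·d sum to N, then m ≡ 1 (mod N).
  have key : ∀ m : ℤ, ¬(N ∣ m) → (∑ j, (m * dd j) % N) = N → N ∣ (m - 1) := by
    intro m hm hS
    set μ : Fin 4 → ℤ := fun j => (m * dd j) % N with hμdef
    have hndvd : ∀ j, ¬ N ∣ m * dd j := by
      intro j hd
      exact hm (((hcop j).symm).dvd_of_dvd_mul_right hd)
    have hμpos : ∀ j, 1 ≤ μ j := by
      intro j
      have h0 : 0 ≤ μ j := Int.emod_nonneg _ (by omega)
      have h1 : μ j ≠ 0 := fun hc => hndvd j (Int.dvd_of_emod_eq_zero hc)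
      omega
    set lam : Fin 4 → ℝ := fun j => (μ j : ℝ)/(N:ℝ) with hlam
    have hlamsum : ∑ j, lam j = 1 := by
      rw [hlam]
      simp only
      rw [← Finset.sum_div]
      rw [show ∑ j, ((μ j : ℤ):ℝ) = ((∑ j, μ j : ℤ) : ℝ) by push_cast; ring]
      rw [hS]; field_simp
    set x : Fin 3 → ℝ := ∑ j, lam j • v j with hx
    have hco : ∀ j, b.coord j x = lam j := fun j => hcoord lam hlamsum j
    have hxint : x ∈ interior (tetSet v) := by
      rw [hint]
      intro j
      rw [hco j, hlam]
      have h1 : (0:ℝ) < (μ j : ℝ) := by exact_mod_cast hμpos j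
      have h2 : (0:ℝ) < (N : ℝ) := by exact_mod_cast hN0
      positivity
    have hxlat : IsLatticePoint x := by
      intro c
      obtain ⟨zw, hzw⟩ := hwl c
      choose zv hzv using fun j => hlat j c
      refine ⟨m * zw - ∑ j, (m * dd j / N) * zv j, ?_⟩
      have hxc : x c = ∑ j, lam j * v j c := by rw [hx]; simp [Finset.sum_apply]
      have hlamj : ∀ j, lam j = (m:ℝ) * ((dd j:ℝ)/(N:ℝ)) - ((m * dd j / N : ℤ):ℝ) := by
        intro j
        have hmod : ((μ j : ℤ) : ℝ) = (m:ℝ)*(dd j:ℝ) - (N:ℝ)*((m*dd j/N : ℤ):ℝ) := by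
          have h5 : μ j = m * dd j - N * (m * dd j / N) := Int.emod_def (m * dd j) N
          rw [h5]; push_cast; ring
        rw [hlam]
        simp only
        rw [hmod]
        field_simp
      rw [hxc]
      rw [Finset.sum_congr rfl (fun j _ => by rw [hlamj j])]
      have e1 : ∑ j, ((m:ℝ) * ((dd j:ℝ)/(N:ℝ)) - ((m * dd j / N : ℤ):ℝ)) * v j c
          = (m:ℝ) * (∑ j, (dd j:ℝ)/(N:ℝ) * v j c) - ∑ j, ((m * dd j / N : ℤ):ℝ) * v j c := by
        rw [Finset.mul_sum, ← Finset.sum_sub_distrib]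
        exact Finset.sum_congr rfl (fun j _ => by ring)
      rw [e1, ← hwc c, hzw]
      rw [Finset.sum_congr rfl (fun j _ => by rw [hzv j])]
      push_cast
      ring
    obtain ⟨y, _, hyu⟩ := huniq
    have hxw : x = w := by
      rw [hyu x ⟨hxint, hxlat⟩, hyu w ⟨hw, hwl⟩]
    have hwco : ∀ j, b.coord j w = (dd j:ℝ)/(N:ℝ) := by
      intro j
      rw [hBC]
      exact hcoord _ hsumdivN j
    have hμd : μ 0 = dd 0 := by
      have h1 : lam 0 = (dd 0:ℝ)/(N:ℝ) := by rw [← hco 0, hxw, hwco 0]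
      rw [hlam] at h1
      simp only at h1
      rw [div_eq_div_iff hNR hNR] at h1
      have h2 := mul_right_cancel₀ hNR h1
      exact_mod_cast h2
    have hdd0N : dd 0 % N = dd 0 := Int.emod_eq_of_lt (by omega) (hddlt 0)
    have hmod0 : (m * dd 0) % N = dd 0 % N := by rw [hdd0N]; exact hμd
    have hdvd0 : N ∣ (m - 1) * dd 0 := by
      have := Int.ModEq.dvd hmod0
      rwa [show dd 0 - m * dd 0 = -((m-1)*dd 0) by ring, dvd_neg] at this
    exact ((hcop 0).symm).dvd_of_dvd_mul_right hdvd0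
  -- Condition C: away from 0, ±1 the residues sum to 2N.
  have hC : ∀ m : ℤ, ¬(N ∣ m) → ¬(N ∣ m - 1) → ¬(N ∣ m + 1) →
      (∑ j, (m * dd j) % N) = 2*N := by
    intro m h0 h1 h2
    have hndvd : ∀ j, ¬ N ∣ m * dd j := fun j hd => h0 (((hcop j).symm).dvd_of_dvd_mul_right hd)
    have hb : ∀ j, 1 ≤ (m * dd j) % N ∧ (m * dd j) % N < N := by
      intro j
      exact ⟨emod_pos_of_not_dvd hN0 (hndvd j), Int.emod_lt_of_pos _ hN0⟩
    have hSd : N ∣ (∑ j, (m * dd j) % N) := by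
      have h3 : ∀ j : Fin 4, N ∣ ((m*dd j)%N - m*dd j) :=
        fun j => ⟨-(m*dd j/N), by rw [Int.emod_def]; ring⟩
      have h4 : N ∣ ∑ j : Fin 4, ((m*dd j)%N - m*dd j) := Finset.dvd_sum (fun j _ => h3 j)
      rw [Finset.sum_sub_distrib] at h4
      have h5 : ∑ j : Fin 4, m*dd j = m*N := by rw [← Finset.mul_sum, hsum]
      rw [h5] at h4
      have h6 : (∑ j, (m * dd j) % N) = ((∑ j, (m * dd j) % N) - m*N) + m*N := by ring
      rw [h6]
      exact h4.add ⟨m, mul_comm m N⟩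
    obtain ⟨c, hc⟩ := hSd
    have hbound : 4 ≤ (∑ j, (m * dd j) % N) ∧ (∑ j, (m * dd j) % N) ≤ 4*N - 4 := by
      rw [Fin.sum_univ_four]
      have b0 := hb 0; have b1 := hb 1; have b2 := hb 2; have b3 := hb 3
      omega
    have hc13 : c = 1 ∨ c = 2 ∨ c = 3 := by
      rcases hbound with ⟨hbb1, hbb2⟩
      rw [hc] at hbb1 hbb2
      have hc1 : 1 ≤ c := by nlinarith
      have hc3 : c ≤ 3 := by nlinarith
      omega
    rcases hc13 with hcv | hcv | hcv
    · exact absurd (key m h0 (by rw [hc, hcv]; ring)) h1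
    · rw [hc, hcv]; ring
    · exfalso
      refine h2 ?_
      have hneg : ∑ j, ((-m) * dd j) % N = N := by
        have e : ∀ j : Fin 4, ((-m)*dd j)%N = N - (m*dd j)%N := by
          intro j
          rw [show (-m)*dd j = -(m*dd j) by ring]
          exact neg_emod_eq hN0 (hndvd j)
        have hfour : (∑ j, (m * dd j) % N) = 3*N := by rw [hc, hcv]; ring
        rw [Fin.sum_univ_four] at hfour
        rw [Fin.sum_univ_four, e 0, e 1, e 2, e 3]
        omega
      have h6 := key (-m) (fun hd => h0 (by rwa [dvd_neg] at hd)) hneg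
      rwa [show -m - 1 = -(m+1) by ring, dvd_neg] at h6
  -- Conclude via the arithmetic lemma, case by case on i.
  intro i
  fin_cases i
  · have hres := main_arith N (dd 0) (dd 1) (dd 2) (dd 3) (hpos 0) (hpos 1) (hpos 2) (hpos 3)
      (by omega) (hcop 0) (hcop 1) (hcop 2) (hcop 3)
      (fun m h0 h1 h2 => by have := hC m h0 h1 h2; rw [Fin.sum_univ_four] at this; linarith)
    rcases hres with hd | hd | hd
    · exact ⟨1, 2, by decide, by decide, by decide, hd⟩
    · exact ⟨1, 3, by decide, by decide, by decide, hd⟩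
    · exact ⟨2, 3, by decide, by decide, by decide, hd⟩
  · have hres := main_arith N (dd 1) (dd 0) (dd 2) (dd 3) (hpos 1) (hpos 0) (hpos 2) (hpos 3)
      (by omega) (hcop 1) (hcop 0) (hcop 2) (hcop 3)
      (fun m h0 h1 h2 => by have := hC m h0 h1 h2; rw [Fin.sum_univ_four] at this; linarith)
    rcases hres with hd | hd | hd
    · exact ⟨0, 2, by decide, by decide, by decide, hd⟩
    · exact ⟨0, 3, by decide, by decide, by decide, hd⟩
    · exact ⟨2, 3, by decide, by decide, by decide, hd⟩
  · have hres := main_arith N (dd 2) (dd 0) (dd 1) (dd 3) (hpos 2) (hpos 0) (hpos 1) (hpos 3)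
      (by omega) (hcop 2) (hcop 0) (hcop 1) (hcop 3)
      (fun m h0 h1 h2 => by have := hC m h0 h1 h2; rw [Fin.sum_univ_four] at this; linarith)
    rcases hres with hd | hd | hd
    · exact ⟨0, 1, by decide, by decide, by decide, hd⟩
    · exact ⟨0, 3, by decide, by decide, by decide, hd⟩
    · exact ⟨1, 3, by decide, by decide, by decide, hd⟩
  · have hres := main_arith N (dd 3) (dd 0) (dd 1) (dd 2) (hpos 3) (hpos 0) (hpos 1) (hpos 2)
      (by omega) (hcop 3) (hcop 0) (hcop 1) (hcop 2)
      (fun m h0 h1 h2 => by have := hC m h0 h1 h2; rw [Fin.sum_univ_four] at this; linarith)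
    rcases hres with hd | hd | hd
    · exact ⟨0, 1, by decide, by decide, by decide, hd⟩
    · exact ⟨0, 2, by decide, by decide, by decide, hd⟩
    · exact ⟨1, 2, by decide, by decide, by decide, hd⟩
end
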